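/- arXiv:math/0404245 — 3 statements merged into one kernel-verified Lean document; each statement's English description precedes it below -/
import Mathlib

section
/- Let x = (x1,x2,x3,x4) ∈ ℤ⁴ satisfy gcd(x1,x2,x3,x4) = 1, x1·x2·x3·x4 ≠ 0, and x1·x2·x3 = x4·(x1+x2+x3)². Then there exist a sign ε ∈ {1,−1}, positive integers s0, s1, s2, s3, u1, u2, u3 and nonzero integers y1, y2, y3 with gcd(y1,y2,y3) = 1 such that: ε·s0·s1·s2·s3·u1·u2·u3 = y1·u1·s1² + y2·u2·s2² + y3·u3·s3²; u1·u2·u3 is squarefree; gcd(s_i,s_j) = 1 and gcd(s_i,u_j) = 1 for all i ≠ j in {1,2,3}; gcd(s0,y_i) = 1 for all i; gcd(s_i,y_j) = 1 for all i ≠ j; gcd(u_i, y1·y2·y3) = 1 for all i; and x_i = y_i·u_i²·u_j·u_k·s0²·s_i² for each permutation {i,j,k} of {1,2,3}, while x4 = y1·y2·y3. -/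
/-!
Work one prime `p` at a time, with `eᵢ = v_p(xᵢ)` and `c = v_p(x₁ + x₂ + x₃)`. The equation
gives `e₁ + e₂ + e₃ = e₄ + 2c`, primitivity makes one of `e₁, …, e₄` vanish, and the
ultrametric inequality applied to `xᵢ = (x₁ + x₂ + x₃) - xⱼ - xₖ` gives `min(c, eⱼ, eₖ) ≤ eᵢ`.
A case analysis on these exponents shows that `yᵢ = sign(xᵢ) gcd(xᵢ, x₄)` satisfy
`y₁y₂y₃ = x₄`, and that the cofactors `zᵢ = xᵢ / yᵢ` have all three pairwise gcds equal to one
number `g`. Then `z₁z₂z₃ = (x₁ + x₂ + x₃)²`, each `zᵢ` is coprime to `yⱼyₖ = x₄ / yᵢ`, and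
`zᵢ = g wᵢ` with the `wᵢ` pairwise coprime. Writing `g = s₀²u₀` and `wᵢ = sᵢ²uᵢ` with squarefree
`u`'s, the square `z₁z₂z₃` equals `u₀ · u₁u₂u₃` times a square, which forces `u₀ = u₁u₂u₃`.
-/

theorem Nat.coprime_div_gcd_of_gcd_mul_eq {a n m : ℕ} (hn : n ≠ 0)
    (h : Nat.gcd a n * m = n) : Nat.Coprime (a / Nat.gcd a n) m := by
  have hg : 0 < Nat.gcd a n := Nat.gcd_pos_of_pos_right a (Nat.pos_of_ne_zero hn)
  rw [Nat.eq_div_of_mul_eq_right hg.ne' h]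
  exact Nat.coprime_div_gcd_div_gcd hg

theorem Nat.Coprime.of_sq_mul_sq_mul {a b c d : ℕ}
    (h : Nat.Coprime (a ^ 2 * b) (c ^ 2 * d)) :
    Nat.Coprime a c ∧ Nat.Coprime a d ∧ Nat.Coprime b c ∧ Nat.Coprime b d := by
  simp only [Nat.coprime_mul_iff_left, Nat.coprime_mul_iff_right,
    Nat.coprime_pow_left_iff two_pos, Nat.coprime_pow_right_iff two_pos] at h
  tauto

theorem Nat.isSquare_of_mul_sq_eq_sq {a n m : ℕ} (hn : n ≠ 0) (h : a * n ^ 2 = m ^ 2) :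
    IsSquare a := by
  rw [← Rat.isSquare_natCast_iff]
  refine ⟨m / n, ?_⟩
  have hn' : (n : ℚ) ≠ 0 := Nat.cast_ne_zero.mpr hn
  field_simp
  exact_mod_cast h

theorem Nat.eq_of_squarefree_of_isSquare_mul {a b : ℕ} (ha : Squarefree a)
    (hb : Squarefree b) (h : IsSquare (a * b)) : a = b := by
  obtain ⟨k, hk⟩ := h
  have hk0 : k ≠ 0 := by rintro rfl; exact mul_ne_zero ha.ne_zero hb.ne_zero hk
  refine Nat.eq_of_factorization_eq ha.ne_zero hb.ne_zero fun p => ?_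
  have hkp := congrArg (·.factorization p) hk
  simp only [Nat.factorization_mul ha.ne_zero hb.ne_zero, Nat.factorization_mul hk0 hk0,
    Finsupp.add_apply] at hkp
  have hap := (Nat.squarefree_iff_factorization_le_one ha.ne_zero).mp ha p
  have hbp := (Nat.squarefree_iff_factorization_le_one hb.ne_zero).mp hb p
  omega

theorem Int.pow_dvd_of_le_factorization_natAbs {p k : ℕ} {z : ℤ}
    (h : k ≤ z.natAbs.factorization p) : (p : ℤ) ^ k ∣ z := by
  rw [← Int.natCast_pow, Int.natCast_dvd]
  exact (pow_dvd_pow p h).trans (Nat.ordProj_dvd _ _)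

theorem Int.min_factorization_natAbs_le_of_eq_sub {p : ℕ} (hp : p.Prime) {a b c d : ℤ}
    (hd : d ≠ 0) (h : d = a - b - c) :
    min (a.natAbs.factorization p) (min (b.natAbs.factorization p) (c.natAbs.factorization p)) ≤
      d.natAbs.factorization p := by
  rw [← hp.pow_dvd_iff_le_factorization (Int.natAbs_ne_zero.mpr hd), ← Int.natCast_dvd,
    Int.natCast_pow, h]
  exact ((Int.pow_dvd_of_le_factorization_natAbs (min_le_left _ _)).sub
    (Int.pow_dvd_of_le_factorization_natAbs ((min_le_right _ _).trans (min_le_left _ _)))).sub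
    (Int.pow_dvd_of_le_factorization_natAbs ((min_le_right _ _).trans (min_le_right _ _)))

theorem Int.natAbs_sign_mul_natCast {x : ℤ} (hx : x ≠ 0) (n : ℕ) : (x.sign * n).natAbs = n := by
  rw [Int.natAbs_mul, Int.natAbs_sign_of_ne_zero hx, one_mul, Int.natAbs_natCast]

theorem Int.sign_mul_sq {a s : ℤ} (hs : s ≠ 0) : (a * s ^ 2).sign = a.sign := by
  have hs2 : 0 < s ^ 2 := by positivity
  rw [Int.sign_mul, Int.sign_eq_one_of_pos hs2, mul_one]

theorem Int.sign_mul_natCast_eq_of_eq_mul {S T : ℤ} {N K : ℕ} (hK : K ≠ 0) (hS : S = K * T)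
    (hN : S.natAbs = N * K) : S.sign * N = T := by
  refine mul_right_cancel₀ (Int.natCast_ne_zero.mpr hK) ?_
  rw [mul_assoc, ← Nat.cast_mul, ← hN, Int.sign_mul_natAbs, hS, mul_comm]

namespace CubicSurfaceTorsor

/-- The `p`-adic valuations `(e₁, e₂, e₃, e₄, c)` of `(x₁, x₂, x₃, x₄, x₁ + x₂ + x₃)` for a
primitive solution: the valuation of the equation, primitivity, and the ultrametric inequality
for `xᵢ = (x₁ + x₂ + x₃) - xⱼ - xₖ`. -/
structure IsLocalSolution (e₁ e₂ e₃ e₄ c : ℕ) : Prop where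
  add_eq : e₁ + e₂ + e₃ = e₄ + 2 * c
  primitive : e₁ = 0 ∨ e₂ = 0 ∨ e₃ = 0 ∨ e₄ = 0
  min_le₁ : min c (min e₂ e₃) ≤ e₁
  min_le₂ : min c (min e₁ e₃) ≤ e₂
  min_le₃ : min c (min e₁ e₂) ≤ e₃

namespace IsLocalSolution

variable {e₁ e₂ e₃ e₄ c : ℕ}

theorem min_add_min_add_min (h : IsLocalSolution e₁ e₂ e₃ e₄ c) :
    min e₁ e₄ + min e₂ e₄ + min e₃ e₄ = e₄ := by
  obtain ⟨_, _, _, _, _⟩ := h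
  omega

theorem min_sub_min_eq (h : IsLocalSolution e₁ e₂ e₃ e₄ c) :
    min (e₁ - min e₁ e₄) (e₃ - min e₃ e₄) = min (e₁ - min e₁ e₄) (e₂ - min e₂ e₄) ∧
      min (e₂ - min e₂ e₄) (e₃ - min e₃ e₄) = min (e₁ - min e₁ e₄) (e₂ - min e₂ e₄) := by
  obtain ⟨_, _, _, _, _⟩ := h
  omega

end IsLocalSolution

theorem isLocalSolution_factorization {x₁ x₂ x₃ x₄ : ℤ}
    (hprim : Int.gcd (Int.gcd x₁ x₂) (Int.gcd x₃ x₄) = 1) (hne : x₁ * x₂ * x₃ * x₄ ≠ 0)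
    (heq : x₁ * x₂ * x₃ = x₄ * (x₁ + x₂ + x₃) ^ 2) (p : ℕ) :
    IsLocalSolution (x₁.natAbs.factorization p) (x₂.natAbs.factorization p)
      (x₃.natAbs.factorization p) (x₄.natAbs.factorization p)
      ((x₁ + x₂ + x₃).natAbs.factorization p) := by
  by_cases hp : p.Prime
  swap
  · simp only [Nat.factorization_eq_zero_of_not_prime _ hp]
    exact ⟨rfl, Or.inl rfl, le_rfl, le_rfl, le_rfl⟩
  simp only [ne_eq, mul_eq_zero, not_or] at hne
  obtain ⟨⟨⟨h₁, h₂⟩, h₃⟩, h₄⟩ := hne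
  have hs : x₁ + x₂ + x₃ ≠ 0 := fun hs => h₁ (by simpa [hs, h₂, h₃, h₄] using heq)
  refine ⟨?_, ?_, ?_, ?_, ?_⟩
  · have := congrArg (·.natAbs.factorization p) heq
    simpa [Int.natAbs_mul, Int.natAbs_pow, Nat.factorization_mul, Nat.factorization_pow, h₁, h₂,
      h₃, h₄, hs, two_mul] using this
  · by_contra! hpos
    have hdvd : ∀ {x : ℤ}, x.natAbs.factorization p ≠ 0 → p ∣ x.natAbs :=
      Nat.dvd_of_factorization_pos
    have : p ∣ 1 := hprim ▸ Nat.dvd_gcd (Nat.dvd_gcd (hdvd hpos.1) (hdvd hpos.2.1))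
      (Nat.dvd_gcd (hdvd hpos.2.2.1) (hdvd hpos.2.2.2))
    exact hp.ne_one (Nat.dvd_one.mp this)
  · exact Int.min_factorization_natAbs_le_of_eq_sub hp h₁ (by ring)
  · exact Int.min_factorization_natAbs_le_of_eq_sub hp h₂ (by ring)
  · exact Int.min_factorization_natAbs_le_of_eq_sub hp h₃ (by ring)

section GcdSplit

variable {X₁ X₂ X₃ X₄ C : ℕ}

theorem gcd_mul_gcd_mul_gcd_eq (h₁ : X₁ ≠ 0) (h₂ : X₂ ≠ 0) (h₃ : X₃ ≠ 0) (h₄ : X₄ ≠ 0)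
    (hloc : ∀ p, IsLocalSolution (X₁.factorization p) (X₂.factorization p) (X₃.factorization p)
      (X₄.factorization p) (C.factorization p)) :
    Nat.gcd X₁ X₄ * Nat.gcd X₂ X₄ * Nat.gcd X₃ X₄ = X₄ := by
  refine Nat.eq_of_factorization_eq (by positivity) h₄ fun p => ?_
  simp only [Nat.factorization_mul, Nat.factorization_gcd, Finsupp.add_apply, Finsupp.inf_apply,
    ne_eq, mul_eq_zero, Nat.gcd_eq_zero_iff, h₁, h₂, h₃, h₄, and_false, or_self, not_false_eq_true]
  exact (hloc p).min_add_min_add_min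

theorem gcd_div_gcd_eq (h₁ : X₁ ≠ 0) (h₂ : X₂ ≠ 0) (h₃ : X₃ ≠ 0) (h₄ : X₄ ≠ 0)
    (hloc : ∀ p, IsLocalSolution (X₁.factorization p) (X₂.factorization p) (X₃.factorization p)
      (X₄.factorization p) (C.factorization p)) :
    Nat.gcd (X₁ / Nat.gcd X₁ X₄) (X₃ / Nat.gcd X₃ X₄) =
        Nat.gcd (X₁ / Nat.gcd X₁ X₄) (X₂ / Nat.gcd X₂ X₄) ∧
      Nat.gcd (X₂ / Nat.gcd X₂ X₄) (X₃ / Nat.gcd X₃ X₄) =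
        Nat.gcd (X₁ / Nat.gcd X₁ X₄) (X₂ / Nat.gcd X₂ X₄) := by
  have hZ : ∀ {X : ℕ}, X ≠ 0 → X / Nat.gcd X X₄ ≠ 0 := fun hX =>
    (Nat.div_pos (Nat.gcd_le_left _ (Nat.pos_of_ne_zero hX)) (Nat.gcd_pos_of_pos_right _
      (Nat.pos_of_ne_zero h₄))).ne'
  refine ⟨Nat.eq_of_factorization_eq (Nat.gcd_ne_zero_left (hZ h₁))
    (Nat.gcd_ne_zero_left (hZ h₁)) fun p => ?_, Nat.eq_of_factorization_eq
    (Nat.gcd_ne_zero_left (hZ h₂)) (Nat.gcd_ne_zero_left (hZ h₁)) fun p => ?_⟩ <;>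
  simp only [Nat.factorization_gcd (hZ h₁) (hZ h₂), Nat.factorization_gcd (hZ h₁) (hZ h₃),
    Nat.factorization_gcd (hZ h₂) (hZ h₃), Nat.factorization_div (Nat.gcd_dvd_left _ _),
    Nat.factorization_gcd h₁ h₄, Nat.factorization_gcd h₂ h₄, Nat.factorization_gcd h₃ h₄,
    Finsupp.inf_apply, Finsupp.tsub_apply]
  exacts [(hloc p).min_sub_min_eq.1, (hloc p).min_sub_min_eq.2]

theorem div_gcd_mul_div_gcd_mul_div_gcd_eq (h₁ : X₁ ≠ 0) (h₂ : X₂ ≠ 0) (h₃ : X₃ ≠ 0)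
    (h₄ : X₄ ≠ 0) (hX : X₁ * X₂ * X₃ = X₄ * C ^ 2)
    (hloc : ∀ p, IsLocalSolution (X₁.factorization p) (X₂.factorization p) (X₃.factorization p)
      (X₄.factorization p) (C.factorization p)) :
    (X₁ / Nat.gcd X₁ X₄) * (X₂ / Nat.gcd X₂ X₄) * (X₃ / Nat.gcd X₃ X₄) = C ^ 2 := by
  refine Nat.eq_of_mul_eq_mul_left (Nat.pos_of_ne_zero h₄) ?_
  nth_rw 1 [← gcd_mul_gcd_mul_gcd_eq h₁ h₂ h₃ h₄ hloc]
  calc _ = (Nat.gcd X₁ X₄ * (X₁ / Nat.gcd X₁ X₄)) * (Nat.gcd X₂ X₄ * (X₂ / Nat.gcd X₂ X₄)) *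
        (Nat.gcd X₃ X₄ * (X₃ / Nat.gcd X₃ X₄)) := by ring
    _ = X₄ * C ^ 2 := by
      rw [Nat.mul_div_cancel' (Nat.gcd_dvd_left X₁ X₄),
        Nat.mul_div_cancel' (Nat.gcd_dvd_left X₂ X₄), Nat.mul_div_cancel' (Nat.gcd_dvd_left X₃ X₄),
        hX]

end GcdSplit

theorem exists_gcd_split {x₁ x₂ x₃ x₄ : ℤ}
    (hprim : Int.gcd (Int.gcd x₁ x₂) (Int.gcd x₃ x₄) = 1) (hne : x₁ * x₂ * x₃ * x₄ ≠ 0)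
    (heq : x₁ * x₂ * x₃ = x₄ * (x₁ + x₂ + x₃) ^ 2) :
    ∃ (y₁ y₂ y₃ : ℤ) (z₁ z₂ z₃ : ℕ),
      x₁ = y₁ * z₁ ∧ x₂ = y₂ * z₂ ∧ x₃ = y₃ * z₃ ∧ x₄ = y₁ * y₂ * y₃ ∧
      Int.gcd (Int.gcd y₁ y₂) y₃ = 1 ∧ z₁ * z₂ * z₃ = (x₁ + x₂ + x₃).natAbs ^ 2 ∧
      Nat.gcd z₁ z₃ = Nat.gcd z₁ z₂ ∧ Nat.gcd z₂ z₃ = Nat.gcd z₁ z₂ ∧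
      IsCoprime (z₁ : ℤ) (y₂ * y₃) ∧ IsCoprime (z₂ : ℤ) (y₁ * y₃) ∧
      IsCoprime (z₃ : ℤ) (y₁ * y₂) := by
  have hloc := isLocalSolution_factorization hprim hne heq
  simp only [ne_eq, mul_eq_zero, not_or] at hne
  obtain ⟨⟨⟨h₁, h₂⟩, h₃⟩, h₄⟩ := hne
  have hs : x₁ + x₂ + x₃ ≠ 0 := fun hs => h₁ (by simpa [hs, h₂, h₃, h₄] using heq)
  have hX : x₁.natAbs * x₂.natAbs * x₃.natAbs = x₄.natAbs * (x₁ + x₂ + x₃).natAbs ^ 2 := by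
    simpa [Int.natAbs_mul, Int.natAbs_pow] using congrArg Int.natAbs heq
  have h₁' := Int.natAbs_ne_zero.mpr h₁
  have h₂' := Int.natAbs_ne_zero.mpr h₂
  have h₃' := Int.natAbs_ne_zero.mpr h₃
  have h₄' := Int.natAbs_ne_zero.mpr h₄
  have hY := gcd_mul_gcd_mul_gcd_eq h₁' h₂' h₃' h₄' hloc
  obtain ⟨h₁₃, h₂₃⟩ := gcd_div_gcd_eq h₁' h₂' h₃' h₄' hloc
  have hsign : x₄.sign = x₁.sign * x₂.sign * x₃.sign := by
    rw [← Int.sign_mul_sq (a := x₄) hs, ← heq, Int.sign_mul, Int.sign_mul]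
  have hsplit : ∀ x : ℤ, x = x.sign * Nat.gcd x.natAbs x₄.natAbs *
      (x.natAbs / Nat.gcd x.natAbs x₄.natAbs : ℕ) := fun x => by
    rw [mul_assoc, ← Nat.cast_mul, Nat.mul_div_cancel' (Nat.gcd_dvd_left _ _),
      Int.sign_mul_natAbs]
  refine ⟨_, _, _, _, _, _, hsplit x₁, hsplit x₂, hsplit x₃, ?_, ?_,
    div_gcd_mul_div_gcd_mul_div_gcd_eq h₁' h₂' h₃' h₄' hX hloc, h₁₃, h₂₃, ?_, ?_, ?_⟩
  · conv_lhs => rw [← Int.sign_mul_natAbs x₄, hsign, ← hY]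
    push_cast
    ring
  · rw [Int.gcd_eq_natAbs] at hprim ⊢
    simp only [Int.gcd_eq_natAbs, Int.natAbs_natCast, Int.natAbs_sign_mul_natCast h₁,
      Int.natAbs_sign_mul_natCast h₂, Int.natAbs_sign_mul_natCast h₃]
    exact Nat.eq_one_of_dvd_one (hprim ▸ gcd_dvd_gcd (gcd_dvd_gcd (Nat.gcd_dvd_left _ _)
      (Nat.gcd_dvd_left _ _)) dvd_rfl)
  all_goals
    simp only [Int.isCoprime_iff_nat_coprime, Int.natAbs_natCast, Int.natAbs_mul,
      Int.natAbs_sign_mul_natCast h₁, Int.natAbs_sign_mul_natCast h₂,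
      Int.natAbs_sign_mul_natCast h₃]
    refine Nat.coprime_div_gcd_of_gcd_mul_eq h₄' (Eq.trans ?_ hY)
    ring

theorem exists_eq_mul_pairwise_coprime_of_gcd_eq {z₁ z₂ z₃ : ℕ} (h₁ : z₁ ≠ 0)
    (h₁₃ : Nat.gcd z₁ z₃ = Nat.gcd z₁ z₂) (h₂₃ : Nat.gcd z₂ z₃ = Nat.gcd z₁ z₂) :
    ∃ g w₁ w₂ w₃ : ℕ, z₁ = g * w₁ ∧ z₂ = g * w₂ ∧ z₃ = g * w₃ ∧
      Nat.Coprime w₁ w₂ ∧ Nat.Coprime w₁ w₃ ∧ Nat.Coprime w₂ w₃ := by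
  have hg : 0 < Nat.gcd z₁ z₂ := Nat.gcd_pos_of_pos_left _ (Nat.pos_of_ne_zero h₁)
  refine ⟨Nat.gcd z₁ z₂, z₁ / Nat.gcd z₁ z₂, z₂ / Nat.gcd z₁ z₂, z₃ / Nat.gcd z₁ z₂,
    (Nat.mul_div_cancel' (Nat.gcd_dvd_left _ _)).symm,
    (Nat.mul_div_cancel' (Nat.gcd_dvd_right _ _)).symm,
    (Nat.mul_div_cancel' (h₁₃ ▸ Nat.gcd_dvd_right _ _)).symm,
    Nat.coprime_div_gcd_div_gcd hg, ?_, ?_⟩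
  · rw [← h₁₃] at hg ⊢
    exact Nat.coprime_div_gcd_div_gcd hg
  · rw [← h₂₃] at hg ⊢
    exact Nat.coprime_div_gcd_div_gcd hg

theorem exists_torsor_parametrization {z₁ z₂ z₃ C : ℕ} (hC : C ≠ 0)
    (hz : z₁ * z₂ * z₃ = C ^ 2) (h₁₃ : Nat.gcd z₁ z₃ = Nat.gcd z₁ z₂)
    (h₂₃ : Nat.gcd z₂ z₃ = Nat.gcd z₁ z₂) :
    ∃ s0 s1 s2 s3 u1 u2 u3 : ℕ,
      0 < s0 ∧ 0 < s1 ∧ 0 < s2 ∧ 0 < s3 ∧ 0 < u1 ∧ 0 < u2 ∧ 0 < u3 ∧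
      Squarefree (u1 * u2 * u3) ∧
      Nat.Coprime s1 s2 ∧ Nat.Coprime s1 s3 ∧ Nat.Coprime s2 s3 ∧
      Nat.Coprime s1 u2 ∧ Nat.Coprime s1 u3 ∧ Nat.Coprime s2 u1 ∧
      Nat.Coprime s2 u3 ∧ Nat.Coprime s3 u1 ∧ Nat.Coprime s3 u2 ∧
      z₁ = u1 ^ 2 * u2 * u3 * s0 ^ 2 * s1 ^ 2 ∧ z₂ = u2 ^ 2 * u1 * u3 * s0 ^ 2 * s2 ^ 2 ∧
      z₃ = u3 ^ 2 * u1 * u2 * s0 ^ 2 * s3 ^ 2 ∧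
      C = s0 * s1 * s2 * s3 * u1 * u2 * u3 * (s0 ^ 2 * (u1 * u2 * u3)) := by
  have hz₀ : z₁ * z₂ * z₃ ≠ 0 := hz ▸ pow_ne_zero 2 hC
  obtain ⟨g, w₁, w₂, w₃, rfl, rfl, rfl, hw₁₂, hw₁₃, hw₂₃⟩ :=
    exists_eq_mul_pairwise_coprime_of_gcd_eq (left_ne_zero_of_mul (left_ne_zero_of_mul hz₀))
      h₁₃ h₂₃
  simp only [ne_eq, mul_eq_zero, not_or] at hz₀
  obtain ⟨⟨⟨hg, hw₁⟩, -, hw₂⟩, -, hw₃⟩ := hz₀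
  obtain ⟨u₀, s0, hu₀, hs0, rfl, hu₀sq⟩ := Nat.sq_mul_squarefree_of_pos (Nat.pos_of_ne_zero hg)
  obtain ⟨u1, s1, hu1, hs1, rfl, hu1sq⟩ := Nat.sq_mul_squarefree_of_pos (Nat.pos_of_ne_zero hw₁)
  obtain ⟨u2, s2, hu2, hs2, rfl, hu2sq⟩ := Nat.sq_mul_squarefree_of_pos (Nat.pos_of_ne_zero hw₂)
  obtain ⟨u3, s3, hu3, hs3, rfl, hu3sq⟩ := Nat.sq_mul_squarefree_of_pos (Nat.pos_of_ne_zero hw₃)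
  obtain ⟨hs12, hs1u2, hu1s2, hu12⟩ := hw₁₂.of_sq_mul_sq_mul
  obtain ⟨hs13, hs1u3, hu1s3, hu13⟩ := hw₁₃.of_sq_mul_sq_mul
  obtain ⟨hs23, hs2u3, hu2s3, hu23⟩ := hw₂₃.of_sq_mul_sq_mul
  have hsq : Squarefree (u1 * u2 * u3) :=
    Nat.squarefree_mul_iff.mpr ⟨Nat.Coprime.mul_left hu13 hu23,
      Nat.squarefree_mul_iff.mpr ⟨hu12, hu1sq, hu2sq⟩, hu3sq⟩
  -- `C ^ 2 = z₁ z₂ z₃ = u₀ · (u1 u2 u3) · (s0 ^ 3 u₀ s1 s2 s3) ^ 2`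
  obtain rfl : u₀ = u1 * u2 * u3 := Nat.eq_of_squarefree_of_isSquare_mul hu₀sq hsq
    (Nat.isSquare_of_mul_sq_eq_sq (n := s0 ^ 3 * u₀ * s1 * s2 * s3) (by positivity)
      (by rw [← hz]; ring))
  refine ⟨s0, s1, s2, s3, u1, u2, u3, hs0, hs1, hs2, hs3, hu1, hu2, hu3, hsq, hs12,
    hs13, hs23, hs1u2, hs1u3, hu1s2.symm, hs2u3, hu1s3.symm, hu2s3.symm, by ring, by ring,
    by ring, Nat.pow_left_injective two_ne_zero ?_⟩
  simp only [← hz]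
  ring

end CubicSurfaceTorsor

theorem passage_to_universal_torsor
    (x1 x2 x3 x4 : ℤ)
    (hprim : Int.gcd (Int.gcd x1 x2) (Int.gcd x3 x4) = 1)
    (hne : x1 * x2 * x3 * x4 ≠ 0)
    (heq : x1 * x2 * x3 = x4 * (x1 + x2 + x3) ^ 2) :
    ∃ (ε : ℤ) (s0 s1 s2 s3 u1 u2 u3 : ℕ) (y1 y2 y3 : ℤ),
      (ε = 1 ∨ ε = -1) ∧
      0 < s0 ∧ 0 < s1 ∧ 0 < s2 ∧ 0 < s3 ∧ 0 < u1 ∧ 0 < u2 ∧ 0 < u3 ∧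
      y1 ≠ 0 ∧ y2 ≠ 0 ∧ y3 ≠ 0 ∧ Int.gcd (Int.gcd y1 y2) y3 = 1 ∧
      ε * ((s0 * s1 * s2 * s3 * u1 * u2 * u3 : ℕ) : ℤ)
        = y1 * u1 * (s1 : ℤ) ^ 2 + y2 * u2 * (s2 : ℤ) ^ 2 + y3 * u3 * (s3 : ℤ) ^ 2 ∧
      Squarefree (u1 * u2 * u3) ∧
      Nat.Coprime s1 s2 ∧ Nat.Coprime s1 s3 ∧ Nat.Coprime s2 s3 ∧
      Nat.Coprime s1 u2 ∧ Nat.Coprime s1 u3 ∧ Nat.Coprime s2 u1 ∧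
      Nat.Coprime s2 u3 ∧ Nat.Coprime s3 u1 ∧ Nat.Coprime s3 u2 ∧
      Int.gcd (s0 : ℤ) y1 = 1 ∧ Int.gcd (s0 : ℤ) y2 = 1 ∧ Int.gcd (s0 : ℤ) y3 = 1 ∧
      Int.gcd (s1 : ℤ) y2 = 1 ∧ Int.gcd (s1 : ℤ) y3 = 1 ∧
      Int.gcd (s2 : ℤ) y1 = 1 ∧ Int.gcd (s2 : ℤ) y3 = 1 ∧
      Int.gcd (s3 : ℤ) y1 = 1 ∧ Int.gcd (s3 : ℤ) y2 = 1 ∧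
      Int.gcd (u1 : ℤ) (y1 * y2 * y3) = 1 ∧ Int.gcd (u2 : ℤ) (y1 * y2 * y3) = 1 ∧
      Int.gcd (u3 : ℤ) (y1 * y2 * y3) = 1 ∧
      x1 = y1 * (u1 : ℤ) ^ 2 * u2 * u3 * (s0 : ℤ) ^ 2 * (s1 : ℤ) ^ 2 ∧
      x2 = y2 * (u2 : ℤ) ^ 2 * u1 * u3 * (s0 : ℤ) ^ 2 * (s2 : ℤ) ^ 2 ∧
      x3 = y3 * (u3 : ℤ) ^ 2 * u1 * u2 * (s0 : ℤ) ^ 2 * (s3 : ℤ) ^ 2 ∧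
      x4 = y1 * y2 * y3 := by
  have hs : x1 + x2 + x3 ≠ 0 := fun hs => hne (by rw [heq, hs]; ring)
  obtain ⟨y1, y2, y3, z1, z2, z3, hx1, hx2, hx3, hx4, hy, hz, h13, h23, hz1, hz2, hz3⟩ :=
    CubicSurfaceTorsor.exists_gcd_split hprim hne heq
  obtain ⟨s0, s1, s2, s3, u1, u2, u3, hs0, hs1, hs2, hs3, hu1, hu2, hu3, hsq, hs12, hs13, hs23,
      hs1u2, hs1u3, hs2u1, hs2u3, hs3u1, hs3u2, rfl, rfl, rfl, hC⟩ :=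
    CubicSurfaceTorsor.exists_torsor_parametrization (Int.natAbs_ne_zero.mpr hs) hz h13 h23
  simp only [ne_eq, mul_eq_zero, not_or] at hne
  refine ⟨(x1 + x2 + x3).sign, s0, s1, s2, s3, u1, u2, u3, y1, y2, y3,
    Int.isUnit_iff.mp (Int.isUnit_iff_natAbs_eq.mpr (Int.natAbs_sign_of_ne_zero hs)),
    hs0, hs1, hs2, hs3, hu1, hu2, hu3, left_ne_zero_of_mul (hx1 ▸ hne.1.1.1),
    left_ne_zero_of_mul (hx2 ▸ hne.1.1.2), left_ne_zero_of_mul (hx3 ▸ hne.1.2), hy,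
    Int.sign_mul_natCast_eq_of_eq_mul (K := s0 ^ 2 * (u1 * u2 * u3)) (by positivity)
      (by rw [hx1, hx2, hx3]; push_cast; ring) hC,
    hsq, hs12, hs13, hs23, hs1u2, hs1u3, hs2u1, hs2u3, hs3u1, hs3u2, ?_⟩
  -- each remaining coprimality condition is a factor of some `zᵢ ⊥ yⱼ yₖ`
  simp only [Nat.cast_mul, Nat.cast_pow, IsCoprime.mul_left_iff, IsCoprime.mul_right_iff,
    IsCoprime.pow_left_iff two_pos] at hz1 hz2 hz3
  simp only [← Int.isCoprime_iff_gcd_eq_one, IsCoprime.mul_right_iff]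
  refine ⟨?_, ?_, ?_, ?_, ?_, ?_, ?_, ?_, ?_, ?_, ?_, ?_, by rw [hx1]; push_cast; ring,
    by rw [hx2]; push_cast; ring, by rw [hx3]; push_cast; ring, hx4⟩ <;> tauto
end

section
/- Let h = (h1,h2,h3) ∈ ℤ³ with gcd(h1,h2,h3) = 1, and let W1, W2, W3 > 0 be real numbers. Then the number of w = (w1,w2,w3) ∈ ℤ³ with gcd(w1,w2,w3) = 1, h1·w1 + h2·w2 + h3·w3 = 0, and |w_i| ≤ W_i for i = 1,2,3, is at most 4 + 12π·W1·W2·W3 / max{|h1|·W1, |h2|·W2, |h3|·W3}. -/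
/-!
For two solutions `w, w'` the cross product `w × w'` is orthogonal to both, hence parallel to
the primitive vector `h`, hence an integer multiple of `h`. The multiple vanishes only when `w`
and `w'` are parallel, i.e. (both being primitive) `w' = ±w`; otherwise the minor
`w₂w₃' - w₃w₂'` has absolute value at least `|h₁|`.

Let `|h₁|W₁` be the largest of the `|hᵢ|Wᵢ` (the other cases follow by permuting coordinates).
Then `h₁ ≠ 0`, so projecting the solutions to their last two coordinates is injective, into
`[-W₂, W₂] × [-W₃, W₃]`. Of each pair `±w` exactly one lands in the upper half-plane. Sorting
those points by angle, consecutive points `p, q` span open parallelograms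
`{s p + t q | 0 < s, t < 1}` of area `det (p, q) ≥ |h₁|`, lying in disjoint angular sectors and
inside `[-2W₂, 2W₂] × [0, 2W₃]`. Each half therefore holds at most `1 + 8W₂W₃/|h₁|` points, and
`2 + 16W₁W₂W₃/(|h₁|W₁)` is below the claimed bound since `16 ≤ 12π`.
-/

open MeasureTheory Set
open scoped ENNReal Pointwise

noncomputable def det2 (a b : ℝ × ℝ) : ℝ := a.1 * b.2 - a.2 * b.1

def UpperHalf (a : ℝ × ℝ) : Prop := 0 < a.2 ∨ (a.2 = 0 ∧ 0 < a.1)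

lemma det2_self (a : ℝ × ℝ) : det2 a a = 0 := by unfold det2; ring

lemma det2_swap (a b : ℝ × ℝ) : det2 b a = -det2 a b := by unfold det2; ring

lemma det2_neg_neg (a b : ℝ × ℝ) : det2 (-a) (-b) = det2 a b := by simp [det2]

lemma UpperHalf.snd_nonneg {a : ℝ × ℝ} (h : UpperHalf a) : 0 ≤ a.2 := by
  rcases h with h | ⟨h, _⟩ <;> linarith

lemma UpperHalf.not_neg {a : ℝ × ℝ} (h : UpperHalf a) : ¬UpperHalf (-a) := by
  simp only [UpperHalf, Prod.fst_neg, Prod.snd_neg] at *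
  rcases h with h | ⟨h, h'⟩ <;> rintro (h'' | ⟨h'', h'''⟩) <;> linarith

lemma upperHalf_or_upperHalf_neg {a : ℝ × ℝ} (ha : a ≠ 0) : UpperHalf a ∨ UpperHalf (-a) := by
  simp only [UpperHalf, Prod.fst_neg, Prod.snd_neg, neg_pos, neg_eq_zero]
  rcases lt_trichotomy a.2 0 with h2 | h2 | h2
  · exact Or.inr (Or.inl h2)
  · rcases lt_trichotomy a.1 0 with h1 | h1 | h1
    · exact Or.inr (Or.inr ⟨h2, h1⟩)
    · exact absurd (Prod.ext h1 h2) ha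
    · exact Or.inl (Or.inr ⟨h2, h1⟩)
  · exact Or.inl (Or.inl h2)

/-- On the upper half-plane, `0 < det2 a b` says that `b` lies strictly counterclockwise of `a`. -/
lemma UpperHalf.det2_pos_trans {a b c : ℝ × ℝ} (ha : UpperHalf a) (hb : UpperHalf b)
    (hc : UpperHalf c) (hab : 0 < det2 a b) (hbc : 0 < det2 b c) : 0 < det2 a c := by
  have hid : a.2 * det2 b c - b.2 * det2 a c + c.2 * det2 a b = 0 := by unfold det2; ring
  have hb2 := hb.snd_nonneg
  have hc2 := hc.snd_nonneg
  unfold det2 at *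
  rcases ha with ha | ⟨ha2, ha1⟩
  · by_contra! h
    nlinarith [mul_nonneg hb2 (neg_nonneg.2 h)]
  · rcases hc with hc | ⟨hc2', hc1⟩
    · rw [ha2]; nlinarith
    · rw [ha2] at hab; rw [hc2'] at hbc; nlinarith

lemma exists_forall_det2_pos {Q : Finset (ℝ × ℝ)} (hne : Q.Nonempty)
    (hQ : ∀ q ∈ Q, UpperHalf q) (hdet : ∀ q ∈ Q, ∀ q' ∈ Q, q ≠ q' → det2 q q' ≠ 0) :
    ∃ m ∈ Q, ∀ q ∈ Q, q ≠ m → 0 < det2 q m := by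
  let r : Q → Q → Prop := fun x y => 0 < det2 y x
  have : IsTrans Q r := ⟨fun x y z hxy hyz =>
    (hQ z z.2).det2_pos_trans (hQ y y.2) (hQ x x.2) hyz hxy⟩
  have : Std.Irrefl r := ⟨fun x => by simp [r, det2_self]⟩
  obtain ⟨q₀, hq₀⟩ := hne
  obtain ⟨m, -, hm⟩ :=
    (Finite.wellFounded_of_trans_of_irrefl r).has_min univ ⟨⟨q₀, hq₀⟩, trivial⟩
  refine ⟨m, m.2, fun q hq hqm => ?_⟩
  have hle : det2 m q ≤ 0 := not_lt.1 (hm ⟨q, hq⟩ trivial)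
  have hne := hdet q hq m m.2 hqm
  rw [det2_swap] at hle
  exact lt_of_le_of_ne (by linarith) hne.symm

noncomputable def spanMap (a b : ℝ × ℝ) : ℝ × ℝ →ₗ[ℝ] ℝ × ℝ :=
  (LinearMap.fst ℝ ℝ ℝ).smulRight a + (LinearMap.snd ℝ ℝ ℝ).smulRight b

lemma spanMap_apply (a b st : ℝ × ℝ) : spanMap a b st = st.1 • a + st.2 • b := rfl

lemma det_spanMap (a b : ℝ × ℝ) : LinearMap.det (spanMap a b) = det2 a b := by
  rw [← LinearMap.det_toMatrix (Module.Basis.finTwoProd ℝ), Matrix.det_fin_two]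
  simp [LinearMap.toMatrix_apply, spanMap_apply, det2]
  ring

def parallelogram (a b : ℝ × ℝ) : Set (ℝ × ℝ) := spanMap a b '' Ioo 0 1 ×ˢ Ioo 0 1

lemma volume_parallelogram (a b : ℝ × ℝ) :
    volume (parallelogram a b) = ENNReal.ofReal |det2 a b| := by
  rw [parallelogram, Measure.addHaar_image_linearMap, det_spanMap, Measure.volume_eq_prod,
    Measure.prod_prod]
  simp [Real.volume_Ioo]

lemma isOpen_parallelogram {a b : ℝ × ℝ} (hab : det2 a b ≠ 0) : IsOpen (parallelogram a b) := by
  rw [← det_spanMap] at hab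
  exact (LinearMap.equivOfDetNeZero _ hab).toContinuousLinearEquiv.isOpenMap _
    (isOpen_Ioo.prod isOpen_Ioo)

lemma parallelogram_subset_add {B : Set (ℝ × ℝ)} (hB : StarConvex ℝ 0 B) {a b : ℝ × ℝ}
    (ha : a ∈ B) (hb : b ∈ B) : parallelogram a b ⊆ B + B := by
  rintro _ ⟨st, ⟨hs, ht⟩, rfl⟩
  exact add_mem_add (hB.smul_mem ha hs.1.le hs.2.le) (hB.smul_mem hb ht.1.le ht.2.le)

lemma snd_pos_and_det2_of_mem_parallelogram {a b x : ℝ × ℝ} (ha : 0 ≤ a.2) (hb : 0 ≤ b.2)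
    (hab : 0 < det2 a b) (hx : x ∈ parallelogram a b) :
    0 < x.2 ∧ 0 < det2 x b ∧ det2 x a < 0 := by
  obtain ⟨⟨s, t⟩, ⟨⟨hs0, -⟩, ⟨ht0, -⟩⟩, rfl⟩ := hx
  have hsnd : 0 < a.2 ∨ 0 < b.2 := by
    by_contra! h
    have : det2 a b = 0 := by simp [det2, le_antisymm h.1 ha, le_antisymm h.2 hb]
    linarith
  have hx2 : (spanMap a b (s, t)).2 = s * a.2 + t * b.2 := by simp [spanMap_apply]
  have hxb : det2 (spanMap a b (s, t)) b = s * det2 a b := by simp [spanMap_apply, det2]; ring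
  have hxa : det2 (spanMap a b (s, t)) a = -(t * det2 a b) := by
    simp [spanMap_apply, det2]; ring
  refine ⟨?_, hxb ▸ mul_pos hs0 hab, hxa ▸ neg_neg_of_pos (mul_pos ht0 hab)⟩
  rw [hx2]
  rcases hsnd with h | h <;> nlinarith [mul_pos hs0 h, mul_pos ht0 h]

theorem exists_sector_volume_ge {δ : ℝ} (hδ : 0 < δ) {B : Set (ℝ × ℝ)} (hB : StarConvex ℝ 0 B)
    (Q : Finset (ℝ × ℝ)) (hne : Q.Nonempty) (hQ : ∀ q ∈ Q, UpperHalf q ∧ q ∈ B)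
    (hdet : ∀ q ∈ Q, ∀ q' ∈ Q, q ≠ q' → δ ≤ |det2 q q'|) :
    ∃ m ∈ Q, ∃ U ⊆ (B + B) ∩ {x | 0 < x.2 ∧ 0 < det2 x m},
      ((Q.card - 1 : ℕ) : ℝ≥0∞) * ENNReal.ofReal δ ≤ volume U := by
  induction Q using Finset.strongInduction with
  | H Q ih =>
  obtain ⟨m, hmQ, hm⟩ := exists_forall_det2_pos hne (fun q hq => (hQ q hq).1)
    fun q hq q' hq' hqq' => abs_pos.1 (hδ.trans_le (hdet q hq q' hq' hqq'))
  rcases (Q.erase m).eq_empty_or_nonempty with hQm | hQm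
  · refine ⟨m, hmQ, ∅, empty_subset _, ?_⟩
    simp [← Finset.card_erase_of_mem hmQ, hQm]
  obtain ⟨m', hm'Q', U', hU', hvolU'⟩ := ih _ (Finset.erase_ssubset hmQ) hQm
    (fun q hq => hQ q (Finset.mem_of_mem_erase hq))
    (fun q hq q' hq' => hdet q (Finset.mem_of_mem_erase hq) q' (Finset.mem_of_mem_erase hq'))
  obtain ⟨hm'ne, hm'Q⟩ := Finset.mem_erase.1 hm'Q'
  have hdet_pos : 0 < det2 m' m := hm m' hm'Q hm'ne
  have hδ_le : δ ≤ det2 m' m := by simpa [abs_of_pos hdet_pos] using hdet m' hm'Q m hmQ hm'ne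
  have hP : ∀ x ∈ parallelogram m' m, 0 < x.2 ∧ 0 < det2 x m ∧ det2 x m' < 0 := fun _ =>
    snd_pos_and_det2_of_mem_parallelogram (hQ m' hm'Q).1.snd_nonneg (hQ m hmQ).1.snd_nonneg
      hdet_pos
  refine ⟨m, hmQ, U' ∪ parallelogram m' m, ?_, ?_⟩
  · refine union_subset (fun x hx => ?_) fun x hx => ?_
    · obtain ⟨hxB, hx2, hxm'⟩ := hU' hx
      exact ⟨hxB, hx2, UpperHalf.det2_pos_trans (Or.inl hx2) (hQ m' hm'Q).1 (hQ m hmQ).1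
        hxm' hdet_pos⟩
    · exact ⟨parallelogram_subset_add hB (hQ m' hm'Q).2 (hQ m hmQ).2 hx, (hP x hx).1,
        (hP x hx).2.1⟩
  · have hdisj : Disjoint U' (parallelogram m' m) := disjoint_left.2 fun x hx hx' => by
      linarith [(hU' hx).2.2, (hP x hx').2.2]
    have hcard : Q.card - 1 = ((Q.erase m).card - 1) + 1 := by
      have := hQm.card_pos
      rw [Finset.card_erase_of_mem hmQ] at this ⊢
      omega
    rw [measure_union hdisj (isOpen_parallelogram hdet_pos.ne').measurableSet, hcard,
      volume_parallelogram, abs_of_pos hdet_pos, Nat.cast_add, Nat.cast_one, add_mul, one_mul]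
    exact add_le_add hvolU' (ENNReal.ofReal_le_ofReal hδ_le)

theorem card_le_one_add_of_upperHalf {δ W H : ℝ} (hδ : 0 < δ) (hW : 0 ≤ W) (hH : 0 ≤ H)
    (Q : Finset (ℝ × ℝ)) (hQ : ∀ q ∈ Q, UpperHalf q ∧ |q.1| ≤ W ∧ |q.2| ≤ H)
    (hdet : ∀ q ∈ Q, ∀ q' ∈ Q, q ≠ q' → δ ≤ |det2 q q'|) :
    (Q.card : ℝ) ≤ 1 + 8 * W * H / δ := by
  rcases Q.eq_empty_or_nonempty with rfl | hne
  · simp only [Finset.card_empty, Nat.cast_zero]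
    positivity
  set B := Icc (-W) W ×ˢ Icc (-H) H
  have hB : StarConvex ℝ 0 B := ((convex_Icc _ _).prod (convex_Icc _ _)).starConvex
    ⟨⟨neg_nonpos.2 hW, hW⟩, ⟨neg_nonpos.2 hH, hH⟩⟩
  obtain ⟨m, -, U, hU, hvol⟩ := exists_sector_volume_ge hδ hB Q hne
    (fun q hq => ⟨(hQ q hq).1, abs_le.1 (hQ q hq).2.1, abs_le.1 (hQ q hq).2.2⟩) hdet
  have hsub : U ⊆ Icc (-(2 * W)) (2 * W) ×ˢ Icc 0 (2 * H) := by
    intro x hx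
    obtain ⟨⟨a, ⟨⟨ha1, ha1'⟩, ha2, ha2'⟩, b, ⟨⟨hb1, hb1'⟩, hb2, hb2'⟩, rfl⟩, hpos, -⟩ := hU hx
    refine ⟨⟨?_, ?_⟩, hpos.le, ?_⟩ <;> simp only [Prod.fst_add, Prod.snd_add] <;> linarith
  have hvol' : ((Q.card - 1 : ℕ) : ℝ≥0∞) * ENNReal.ofReal δ ≤ ENNReal.ofReal (8 * W * H) :=
    calc _ ≤ volume U := hvol
      _ ≤ volume (Icc (-(2 * W)) (2 * W) ×ˢ Icc 0 (2 * H)) := measure_mono hsub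
      _ = ENNReal.ofReal (8 * W * H) := by
        rw [Measure.volume_eq_prod, Measure.prod_prod, Real.volume_Icc, Real.volume_Icc,
          ← ENNReal.ofReal_mul (by linarith)]
        ring_nf
  rw [← ENNReal.ofReal_natCast, ← ENNReal.ofReal_mul (Nat.cast_nonneg _),
    ENNReal.ofReal_le_ofReal_iff (by positivity), ← le_div_iff₀ hδ,
    Nat.cast_sub hne.card_pos, Nat.cast_one] at hvol'
  linarith

theorem card_le_two_add_of_abs_det2_ge {δ W H : ℝ} (hδ : 0 < δ) (hW : 0 ≤ W) (hH : 0 ≤ H)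
    (Q : Finset (ℝ × ℝ)) (h0 : (0 : ℝ × ℝ) ∉ Q) (hQ : ∀ q ∈ Q, |q.1| ≤ W ∧ |q.2| ≤ H)
    (hdet : ∀ q ∈ Q, ∀ q' ∈ Q, q ≠ q' → q ≠ -q' → δ ≤ |det2 q q'|) :
    (Q.card : ℝ) ≤ 2 + 16 * W * H / δ := by
  classical
  have hne0 : ∀ q ∈ Q, q ≠ 0 := fun q hq h => h0 (h ▸ hq)
  have hupper := card_le_one_add_of_upperHalf hδ hW hH (Q.filter UpperHalf)
    (fun q hq => ⟨(Finset.mem_filter.1 hq).2, hQ q (Finset.mem_filter.1 hq).1⟩)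
    fun q hq q' hq' hqq' => by
      rw [Finset.mem_filter] at hq hq'
      refine hdet q hq.1 q' hq'.1 hqq' fun h => hq'.2.not_neg ?_
      simpa [h] using hq.2
  have hlower := card_le_one_add_of_upperHalf hδ hW hH
    ((Q.filter fun q => ¬UpperHalf q).image Neg.neg)
    (by
      simp only [Finset.mem_image, Finset.mem_filter]
      rintro _ ⟨q, ⟨hq, hqU⟩, rfl⟩
      refine ⟨(upperHalf_or_upperHalf_neg (hne0 q hq)).resolve_left hqU, ?_⟩
      simpa using hQ q hq)
    (by
      simp only [Finset.mem_image, Finset.mem_filter]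
      rintro _ ⟨q, ⟨hq, hqU⟩, rfl⟩ _ ⟨q', ⟨hq', hq'U⟩, rfl⟩ hqq'
      rw [det2_neg_neg]
      refine hdet q hq q' hq' (fun h => hqq' (h ▸ rfl)) fun h => hq'U ?_
      simpa [h] using (upperHalf_or_upperHalf_neg (hne0 q hq)).resolve_left hqU)
  rw [Finset.card_image_of_injective _ neg_injective] at hlower
  have hsplit : ((Q.filter UpperHalf).card : ℝ) + ((Q.filter fun q => ¬UpperHalf q).card : ℝ) =
      Q.card := by
    exact_mod_cast Finset.card_filter_add_card_filter_not UpperHalf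
  have h16 : 16 * W * H / δ = 2 * (8 * W * H / δ) := by ring
  linarith

def IsPrimitive (w : ℤ × ℤ × ℤ) : Prop := Int.gcd (Int.gcd w.1 w.2.1) w.2.2 = 1

def dot3 (a b : ℤ × ℤ × ℤ) : ℤ := a.1 * b.1 + a.2.1 * b.2.1 + a.2.2 * b.2.2

def cross3 (a b : ℤ × ℤ × ℤ) : ℤ × ℤ × ℤ :=
  (a.2.1 * b.2.2 - a.2.2 * b.2.1, a.2.2 * b.1 - a.1 * b.2.2, a.1 * b.2.1 - a.2.1 * b.1)

lemma dot3_comm (a b : ℤ × ℤ × ℤ) : dot3 a b = dot3 b a := by unfold dot3; ring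

lemma cross3_cross3 (a b c : ℤ × ℤ × ℤ) :
    cross3 (cross3 a b) c = dot3 a c • b - dot3 b c • a := by
  simp only [cross3, dot3, Prod.ext_iff, Prod.fst_sub, Prod.snd_sub, Prod.smul_fst,
    Prod.smul_snd, smul_eq_mul]
  refine ⟨by ring, by ring, by ring⟩

lemma IsPrimitive.ne_zero {a : ℤ × ℤ × ℤ} (ha : IsPrimitive a) : a ≠ 0 := by
  rintro rfl
  simp [IsPrimitive] at ha

lemma IsPrimitive.exists_dot3_eq_one {a : ℤ × ℤ × ℤ} (ha : IsPrimitive a) :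
    ∃ u, dot3 a u = 1 := by
  obtain ⟨x, y, hxy⟩ := Int.isCoprime_iff_gcd_eq_one.2 ha
  have hg := Int.gcd_eq_gcd_ab a.1 a.2.1
  exact ⟨(x * Int.gcdA a.1 a.2.1, x * Int.gcdB a.1 a.2.1, y), by
    unfold dot3; linear_combination hxy - x * hg⟩

lemma IsPrimitive.eq_smul_of_cross3_eq_zero {a b : ℤ × ℤ × ℤ} (ha : IsPrimitive a)
    (h : cross3 b a = 0) : ∃ m : ℤ, b = m • a := by
  obtain ⟨u, hu⟩ := ha.exists_dot3_eq_one
  have := cross3_cross3 b a u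
  rw [h, hu, one_smul, show cross3 0 u = 0 by simp [cross3]] at this
  exact ⟨dot3 b u, (sub_eq_zero.1 this.symm).symm⟩

lemma IsPrimitive.eq_or_eq_neg_of_cross3_eq_zero {a b : ℤ × ℤ × ℤ} (ha : IsPrimitive a)
    (hb : IsPrimitive b) (h : cross3 b a = 0) : b = a ∨ b = -a := by
  obtain ⟨m, rfl⟩ := ha.eq_smul_of_cross3_eq_zero h
  have hm : m ∣ 1 := by
    have := Int.dvd_coe_gcd (Int.dvd_coe_gcd (dvd_mul_right m a.1) (dvd_mul_right m a.2.1))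
      (dvd_mul_right m a.2.2)
    rwa [show Int.gcd (Int.gcd (m * a.1) (m * a.2.1)) (m * a.2.2) = 1 from hb,
      Nat.cast_one] at this
  rcases Int.isUnit_iff.1 (isUnit_of_dvd_one hm) with rfl | rfl <;> simp

lemma IsPrimitive.exists_cross3_eq_smul {h w w' : ℤ × ℤ × ℤ} (hh : IsPrimitive h)
    (hw : dot3 h w = 0) (hw' : dot3 h w' = 0) : ∃ k : ℤ, cross3 w w' = k • h :=
  hh.eq_smul_of_cross3_eq_zero <| by
    rw [cross3_cross3, dot3_comm, hw, dot3_comm, hw', zero_smul, zero_smul, sub_zero]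

lemma IsPrimitive.abs_fst_le_abs_cross3_fst {h w w' : ℤ × ℤ × ℤ} (hh : IsPrimitive h)
    (hw : IsPrimitive w) (hw' : IsPrimitive w') (hhw : dot3 h w = 0) (hhw' : dot3 h w' = 0)
    (hne : w ≠ w') (hne' : w ≠ -w') : |h.1| ≤ |(cross3 w w').1| := by
  obtain ⟨k, hk⟩ := hh.exists_cross3_eq_smul hhw hhw'
  have hk0 : k ≠ 0 := by
    rintro rfl
    rw [zero_smul] at hk
    rcases hw'.eq_or_eq_neg_of_cross3_eq_zero hw hk with h | h
    exacts [hne h, hne' h]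
  rw [hk, Prod.smul_fst, smul_eq_mul, abs_mul]
  exact le_mul_of_one_le_left (abs_nonneg _) (Int.one_le_abs hk0)

lemma eq_of_dot3_eq_zero_of_snd_eq {h w w' : ℤ × ℤ × ℤ} (h1 : h.1 ≠ 0) (hw : dot3 h w = 0)
    (hw' : dot3 h w' = 0) (h2 : w.2 = w'.2) : w = w' := by
  refine Prod.ext (mul_left_cancel₀ h1 ?_) h2
  unfold dot3 at hw hw'
  rw [h2] at hw
  linarith

lemma isPrimitive_swap12 (a b c : ℤ) : IsPrimitive (b, a, c) ↔ IsPrimitive (a, b, c) := by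
  simp only [IsPrimitive, Int.gcd_comm b a]

lemma isPrimitive_swap13 (a b c : ℤ) : IsPrimitive (c, b, a) ↔ IsPrimitive (a, b, c) := by
  simp only [IsPrimitive]
  rw [Int.gcd_assoc, Int.gcd_comm, Int.gcd_comm b a]

def primitiveSolutionsInBox (h1 h2 h3 : ℤ) (W1 W2 W3 : ℝ) : Set (ℤ × ℤ × ℤ) :=
  {w | IsPrimitive w ∧ dot3 (h1, h2, h3) w = 0 ∧
    ((|w.1| : ℤ) : ℝ) ≤ W1 ∧ ((|w.2.1| : ℤ) : ℝ) ≤ W2 ∧ ((|w.2.2| : ℤ) : ℝ) ≤ W3}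

lemma finite_primitiveSolutionsInBox (h1 h2 h3 : ℤ) (W1 W2 W3 : ℝ) :
    (primitiveSolutionsInBox h1 h2 h3 W1 W2 W3).Finite := by
  refine ((finite_Icc (-⌈W1⌉) ⌈W1⌉).prod ((finite_Icc (-⌈W2⌉) ⌈W2⌉).prod
    (finite_Icc (-⌈W3⌉) ⌈W3⌉))).subset ?_
  rintro w ⟨-, -, hb1, hb2, hb3⟩
  have hceil {x : ℤ} {W : ℝ} (hx : ((|x| : ℤ) : ℝ) ≤ W) : x ∈ Icc (-⌈W⌉) ⌈W⌉ :=
    abs_le.1 (Int.cast_le.1 (hx.trans (Int.le_ceil W)))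
  exact ⟨hceil hb1, hceil hb2, hceil hb3⟩

lemma ncard_primitiveSolutionsInBox_swap12 (h1 h2 h3 : ℤ) (W1 W2 W3 : ℝ) :
    (primitiveSolutionsInBox h2 h1 h3 W2 W1 W3).ncard =
      (primitiveSolutionsInBox h1 h2 h3 W1 W2 W3).ncard := by
  have hσ : Function.Involutive fun w : ℤ × ℤ × ℤ => (w.2.1, w.1, w.2.2) := fun _ => rfl
  rw [← ncard_preimage_of_injective_subset_range hσ.injective (by simp [hσ.surjective.range_eq])]
  congr 1
  ext ⟨a, b, c⟩
  simp only [primitiveSolutionsInBox, mem_preimage, mem_ofPred_eq, isPrimitive_swap12, dot3]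
  constructor <;> rintro ⟨hp, hd, hb1, hb2, hb3⟩ <;> exact ⟨hp, by linarith, hb2, hb1, hb3⟩

lemma ncard_primitiveSolutionsInBox_swap13 (h1 h2 h3 : ℤ) (W1 W2 W3 : ℝ) :
    (primitiveSolutionsInBox h3 h2 h1 W3 W2 W1).ncard =
      (primitiveSolutionsInBox h1 h2 h3 W1 W2 W3).ncard := by
  have hσ : Function.Involutive fun w : ℤ × ℤ × ℤ => (w.2.2, w.2.1, w.1) := fun _ => rfl
  rw [← ncard_preimage_of_injective_subset_range hσ.injective (by simp [hσ.surjective.range_eq])]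
  congr 1
  ext ⟨a, b, c⟩
  simp only [primitiveSolutionsInBox, mem_preimage, mem_ofPred_eq, isPrimitive_swap13, dot3]
  constructor <;> rintro ⟨hp, hd, hb1, hb2, hb3⟩ <;> exact ⟨hp, by linarith, hb3, hb2, hb1⟩

theorem ncard_primitiveSolutionsInBox_le {h1 h2 h3 : ℤ} (hprim : IsPrimitive (h1, h2, h3))
    (h1ne : h1 ≠ 0) (W1 : ℝ) {W2 W3 : ℝ} (hW2 : 0 ≤ W2) (hW3 : 0 ≤ W3) :
    ((primitiveSolutionsInBox h1 h2 h3 W1 W2 W3).ncard : ℝ) ≤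
      2 + 16 * W2 * W3 / ((|h1| : ℤ) : ℝ) := by
  set S := primitiveSolutionsInBox h1 h2 h3 W1 W2 W3
  set φ : ℤ × ℤ × ℤ → ℝ × ℝ := fun w => ((w.2.1 : ℝ), (w.2.2 : ℝ))
  have hφ_eq {w w' : ℤ × ℤ × ℤ} (hw : w ∈ S) (hw' : w' ∈ S) (h : φ w = φ w') : w = w' :=
    eq_of_dot3_eq_zero_of_snd_eq h1ne hw.2.1 hw'.2.1 <| by
      simp only [φ, Prod.ext_iff, Int.cast_inj] at h
      exact Prod.ext h.1 h.2
  have hdet (w w' : ℤ × ℤ × ℤ) : det2 (φ w) (φ w') = (cross3 w w').1 := by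
    simp [φ, det2, cross3]
  have hfin := (finite_primitiveSolutionsInBox h1 h2 h3 W1 W2 W3).image φ
  rw [← InjOn.ncard_image fun w hw w' hw' => hφ_eq hw hw', ncard_eq_toFinset_card _ hfin]
  refine card_le_two_add_of_abs_det2_ge (by positivity) hW2 hW3 _ ?_ ?_ ?_
  · rintro hmem
    obtain ⟨w, hw, hw0⟩ := (Finite.mem_toFinset hfin).1 hmem
    refine hw.1.ne_zero (eq_of_dot3_eq_zero_of_snd_eq h1ne hw.2.1 (by simp [dot3]) ?_)
    simp only [φ, Prod.ext_iff, Prod.fst_zero, Prod.snd_zero, Int.cast_eq_zero] at hw0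
    exact Prod.ext hw0.1 hw0.2
  · rintro _ hq
    obtain ⟨w, ⟨-, -, -, hb2, hb3⟩, rfl⟩ := (Finite.mem_toFinset hfin).1 hq
    exact ⟨by simpa [φ] using hb2, by simpa [φ] using hb3⟩
  · rintro _ hq _ hq' hne hne'
    obtain ⟨w, hw, rfl⟩ := (Finite.mem_toFinset hfin).1 hq
    obtain ⟨w', hw', rfl⟩ := (Finite.mem_toFinset hfin).1 hq'
    rw [hdet, ← Int.cast_abs, Int.cast_le]
    exact hprim.abs_fst_le_abs_cross3_fst hw.1 hw'.1 hw.2.1 hw'.2.1 (fun h => hne (h ▸ rfl))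
      fun h => hne' (by simp [h, φ])

theorem ncard_primitiveSolutionsInBox_le_of_ne_zero {h1 h2 h3 : ℤ}
    (hprim : IsPrimitive (h1, h2, h3)) (h1ne : h1 ≠ 0) {W1 W2 W3 : ℝ} (hW1 : 0 < W1)
    (hW2 : 0 ≤ W2) (hW3 : 0 ≤ W3) :
    ((primitiveSolutionsInBox h1 h2 h3 W1 W2 W3).ncard : ℝ) ≤
      4 + 12 * Real.pi * (W1 * W2 * W3) / (((|h1| : ℤ) : ℝ) * W1) := by
  calc _ ≤ 2 + 16 * W2 * W3 / ((|h1| : ℤ) : ℝ) :=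
        ncard_primitiveSolutionsInBox_le hprim h1ne W1 hW2 hW3
    _ = 2 + 16 * (W1 * W2 * W3) / (((|h1| : ℤ) : ℝ) * W1) := by
        field_simp
    _ ≤ 4 + 12 * Real.pi * (W1 * W2 * W3) / (((|h1| : ℤ) : ℝ) * W1) := by
        gcongr
        · norm_num
        · linarith [Real.pi_gt_three]

theorem primitive_points_on_plane_in_box
    (h1 h2 h3 : ℤ) (hprim : Int.gcd (Int.gcd h1 h2) h3 = 1)
    (W1 W2 W3 : ℝ) (hW1 : 0 < W1) (hW2 : 0 < W2) (hW3 : 0 < W3) :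
    (Set.ncard {w : ℤ × ℤ × ℤ |
        Int.gcd (Int.gcd w.1 w.2.1) w.2.2 = 1 ∧
        h1 * w.1 + h2 * w.2.1 + h3 * w.2.2 = 0 ∧
        ((|w.1| : ℤ) : ℝ) ≤ W1 ∧ ((|w.2.1| : ℤ) : ℝ) ≤ W2 ∧
        ((|w.2.2| : ℤ) : ℝ) ≤ W3} : ℝ) ≤
      4 + 12 * Real.pi * (W1 * W2 * W3) /
        max (max (((|h1| : ℤ) : ℝ) * W1) (((|h2| : ℤ) : ℝ) * W2)) (((|h3| : ℤ) : ℝ) * W3) := by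
  change ((primitiveSolutionsInBox h1 h2 h3 W1 W2 W3).ncard : ℝ) ≤ _
  have hprim : IsPrimitive (h1, h2, h3) := hprim
  have hM : 0 < max (max (((|h1| : ℤ) : ℝ) * W1) (((|h2| : ℤ) : ℝ) * W2))
      (((|h3| : ℤ) : ℝ) * W3) := by
    have : h1 ≠ 0 ∨ h2 ≠ 0 ∨ h3 ≠ 0 := by
      by_contra! h
      exact hprim.ne_zero (by simp [h])
    simp only [lt_max_iff]
    rcases this with h | h | h
    exacts [Or.inl (Or.inl (by positivity)), Or.inl (Or.inr (by positivity)),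
      Or.inr (by positivity)]
  rcases max_choice (max (((|h1| : ℤ) : ℝ) * W1) (((|h2| : ℤ) : ℝ) * W2))
    (((|h3| : ℤ) : ℝ) * W3) with hmax | hmax
  · rcases max_choice (((|h1| : ℤ) : ℝ) * W1) (((|h2| : ℤ) : ℝ) * W2) with hmax' | hmax'
    · rw [hmax, hmax'] at hM ⊢
      exact ncard_primitiveSolutionsInBox_le_of_ne_zero hprim (by rintro rfl; simp at hM) hW1
        hW2.le hW3.le
    · rw [hmax, hmax'] at hM ⊢
      rw [← ncard_primitiveSolutionsInBox_swap12]
      convert ncard_primitiveSolutionsInBox_le_of_ne_zero ((isPrimitive_swap12 _ _ _).2 hprim)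
        (by rintro rfl; simp at hM) hW2 hW1.le hW3.le using 3
      ring
  · rw [hmax] at hM ⊢
    rw [← ncard_primitiveSolutionsInBox_swap13]
    convert ncard_primitiveSolutionsInBox_le_of_ne_zero ((isPrimitive_swap13 _ _ _).2 hprim)
      (by rintro rfl; simp at hM) hW3 hW2.le hW1.le using 3
    ring
end

section
/- There is an absolute constant C > 0 with the following property. Let z, N ≥ 1 be reals, let S be a subset of the integers in [1, N], and suppose that for every prime p ≤ z there is an integer σ(p) with 0 ≤ σ(p) < p such that the image of S in ℤ/pℤ has p − σ(p) elements. Then #S ≤ C·(N + z²)/G(z), where G(z) = Σ_{n ≤ z} |μ(n)|·∏_{p | n} σ(p)/(p − σ(p)), the sum over positive integers n ≤ z and the product over primes p dividing n. -/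
/-!
With `e(x) = exp(2πix)` and `T(x) = ∑_{n ∈ S} w_n e(nx)`, the argument has an analytic and an
arithmetic half.

Analytic large sieve (Gallagher): on an interval `I` of length `δ` around `x`,
`|T(x)|² ≤ δ⁻¹ ∫_I |T|² + ∫_I |(|T|²)'|`. Summing over `δ`-separated points of `[0, 1]` and
bounding `|(|T|²)'| ≤ 2|T||T'|` by AM-GM and Parseval gives
`∑ᵣ |T(xᵣ)|² ≤ 2(δ⁻¹ + 4πN) ∑ |w_n|²` when `S ⊆ [-N, N]`. Farey fractions `a/q` with `q ≤ Q`
are `Q⁻²`-separated.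

Arithmetic inequality (Montgomery): if `S` occupies `p - σ(p)` classes mod `p`, splitting `T`
by residue classes and using Cauchy–Schwarz and orthogonality of `b ↦ e(kb/p)` gives
`σ(p)/(p - σ(p)) |T(x)|² ≤ ∑_{0 < b < p} |T(x + b/p)|²`. By the Chinese remainder theorem
`a/r + b/p ≡ (ap + br)/(pr) mod 1` runs injectively through the reduced fractions of
denominator `pr`, so induction over the prime factors of a squarefree `q` yields
`|T(0)|² ∏_{p ∣ q} σ(p)/(p - σ(p)) ≤ ∑_{(a, q) = 1} |T(a/q)|²`. Summing over `q ≤ z` with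
`w = 1` and comparing with the large sieve gives `(#S)² G(z) ≤ 2(z² + 4πN) #S`.
-/

open ArithmeticFunction

namespace LargeSieve

open Finset Complex
open scoped Real ComplexConjugate

noncomputable section

def e (x : ℝ) : ℂ := exp (2 * π * I * x)

def expSum (S : Finset ℤ) (w : ℤ → ℂ) (x : ℝ) : ℂ := ∑ n ∈ S, w n * e (n * x)

theorem e_add (x y : ℝ) : e (x + y) = e x * e y := by
  rw [e, e, e, ← exp_add]; push_cast; ring_nf

theorem e_zero : e 0 = 1 := by simp [e]

theorem e_intCast (k : ℤ) : e k = 1 := by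
  rw [e, show 2 * π * I * ((k : ℝ) : ℂ) = k * (2 * π * I) by push_cast; ring]
  exact exp_int_mul_two_pi_mul_I k

theorem e_eq_one_iff (x : ℝ) : e x = 1 ↔ ∃ k : ℤ, x = k := by
  rw [e, exp_eq_one_iff]
  refine exists_congr fun k => ⟨fun h => ?_, fun h => by rw [h]; push_cast; ring⟩
  have : ((x : ℂ) - k) * (2 * π * I) = 0 := by linear_combination h
  have hx : (x : ℂ) = ((k : ℝ) : ℂ) := by
    simpa [sub_eq_zero, Real.pi_ne_zero, I_ne_zero] using this
  exact_mod_cast hx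

theorem e_natCast_mul (m : ℕ) (x : ℝ) : e (m * x) = e x ^ m := by
  rw [e, e, ← exp_nat_mul]; push_cast; ring_nf

theorem conj_e (x : ℝ) : conj (e x) = e (-x) := by
  rw [e, e, ← exp_conj]; simp [conj_ofNat]

@[fun_prop]
theorem continuous_e : Continuous e := by unfold e; fun_prop

theorem hasDerivAt_e_mul (c x : ℝ) :
    HasDerivAt (fun x => e (c * x)) (2 * π * I * c * e (c * x)) x := by
  have := ((hasDerivAt_id (x : ℂ)).const_mul (2 * π * I * c)).cexp.comp_ofReal
  simpa [e, mul_assoc, mul_comm, mul_left_comm] using this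

theorem integral_e_intCast_mul (k : ℤ) (a : ℝ) (m : ℕ) :
    ∫ x in a..a + m, e (k * x) = if k = 0 then (m : ℂ) else 0 := by
  split_ifs with hk
  · simp [hk, e_zero]
  have hc : 2 * π * I * k ≠ 0 := by simp [hk, Real.pi_ne_zero, I_ne_zero]
  have hderiv (x : ℝ) : HasDerivAt (fun x => e (k * x) / (2 * π * I * k)) (e (k * x)) x := by
    simpa [hc] using (hasDerivAt_e_mul k x).div_const (2 * π * I * k)
  rw [intervalIntegral.integral_eq_sub_of_hasDerivAt (fun x _ => hderiv x)
      (Continuous.intervalIntegrable (by fun_prop) _ _),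
    show (k : ℝ) * (a + m) = k * a + ((k * m : ℤ) : ℝ) by push_cast; ring, e_add, e_intCast,
    mul_one, sub_self]

theorem sum_range_e_mul_div (k : ℤ) {p : ℕ} (hp : 0 < p) :
    ∑ b ∈ range p, e (k * b / p) = if (k : ZMod p) = 0 then (p : ℂ) else 0 := by
  have hpow (b : ℕ) : e (k * b / p) = e (k / p) ^ b := by
    rw [← e_natCast_mul]; ring_nf
  simp_rw [hpow]
  split_ifs with hk
  · obtain ⟨j, rfl⟩ := (ZMod.intCast_zmod_eq_zero_iff_dvd k p).1 hk
    rw [show ((p * j : ℤ) : ℝ) / p = (j : ℝ) by push_cast; field_simp, e_intCast]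
    simp
  · have hζ : e (k / p) ≠ 1 := by
      rw [Ne, e_eq_one_iff]
      rintro ⟨j, hj⟩
      apply hk
      rw [div_eq_iff (by positivity)] at hj
      rw [show k = j * p by exact_mod_cast hj]
      simp
    rw [geom_sum_eq hζ, ← e_natCast_mul, mul_div_cancel₀ _ (by positivity), e_intCast, sub_self,
      zero_div]

variable (S : Finset ℤ) (w : ℤ → ℂ)

theorem periodic_expSum : Function.Periodic (expSum S w) 1 := fun x => by
  refine sum_congr rfl fun n _ => ?_
  rw [mul_add, e_add, mul_one, e_intCast, mul_one]

@[fun_prop]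
theorem continuous_expSum : Continuous (expSum S w) := by
  unfold expSum; fun_prop

theorem hasDerivAt_expSum (x : ℝ) :
    HasDerivAt (expSum S w) (expSum S (fun n => 2 * π * I * n * w n) x) x := by
  refine HasDerivAt.fun_sum fun n _ => ?_
  have := (hasDerivAt_e_mul n x).const_mul (w n)
  push_cast at this
  exact this.congr_deriv (by ring)

theorem ofReal_norm_sq_expSum (x : ℝ) :
    ((‖expSum S w x‖ ^ 2 : ℝ) : ℂ) =
      ∑ m ∈ S, ∑ n ∈ S, w m * conj (w n) * e ((m - n : ℤ) * x) := by
  rw [ofReal_pow, ← mul_conj', expSum, map_sum, sum_mul_sum]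
  refine sum_congr rfl fun m _ => sum_congr rfl fun n _ => ?_
  rw [map_mul, conj_e, mul_mul_mul_comm, ← e_add]
  push_cast; ring_nf

theorem integral_norm_sq_expSum (a : ℝ) (m : ℕ) :
    ∫ x in a..a + m, ‖expSum S w x‖ ^ 2 = m * ∑ n ∈ S, ‖w n‖ ^ 2 := by
  apply ofReal_injective
  rw [← intervalIntegral.integral_ofReal]
  simp_rw [ofReal_norm_sq_expSum]
  have hint (k l : ℤ) : IntervalIntegrable (fun x : ℝ => w k * conj (w l) * e ((k - l : ℤ) * x))
      MeasureTheory.volume a (a + m) :=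
    Continuous.intervalIntegrable (by fun_prop) _ _
  rw [intervalIntegral.integral_finsetSum fun k _ => (by fun_prop : Continuous fun x : ℝ =>
    ∑ l ∈ S, w k * conj (w l) * e ((k - l : ℤ) * x)).intervalIntegrable _ _]
  simp_rw [intervalIntegral.integral_finsetSum fun l _ => hint _ l,
    intervalIntegral.integral_const_mul, integral_e_intCast_mul, sub_eq_zero, mul_ite, mul_zero,
    sum_ite_eq, mul_conj']
  push_cast
  rw [mul_sum]
  exact sum_congr rfl fun n hn => by simp [hn, mul_comm]

section Gallagher

open MeasureTheory Set
open scoped Interval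

theorem mul_le_integral_add_mul_integral_abs_deriv {g g' : ℝ → ℝ}
    (hg : ∀ y, HasDerivAt g (g' y) y) (hg' : Continuous g') {u v x : ℝ} (hux : u ≤ x)
    (hxv : x ≤ v) :
    (v - u) * g x ≤ (∫ t in u..v, g t) + (v - u) * ∫ t in u..v, |g' t| := by
  have hgc : Continuous g := continuous_iff_continuousAt.2 fun y => (hg y).continuousAt
  have hvar : ∀ t ∈ Icc u v, g x ≤ g t + ∫ s in u..v, |g' s| := by
    intro t ht
    have hsub : Ι t x ⊆ Ι u v := uIoc_subset_uIoc_of_uIcc_subset_uIcc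
      (uIcc_subset_uIcc (Icc_subset_uIcc ht) (Icc_subset_uIcc ⟨hux, hxv⟩))
    have hftc : ∫ s in t..x, g' s = g x - g t :=
      intervalIntegral.integral_eq_sub_of_hasDerivAt (fun s _ => hg s) (hg'.intervalIntegrable _ _)
    calc g x = g t + ∫ s in t..x, g' s := by rw [hftc]; ring
      _ ≤ g t + |∫ s in t..x, (|g' s|)| := by
        gcongr
        simpa only [Real.norm_eq_abs] using (le_abs_self _).trans
          (intervalIntegral.norm_integral_le_abs_integral_norm (f := g') (a := t) (b := x))
      _ ≤ g t + |∫ s in u..v, (|g' s|)| := by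
        gcongr 1
        exact intervalIntegral.abs_integral_mono_interval hsub
          (Filter.Eventually.of_forall fun s => abs_nonneg _) (hg'.abs.intervalIntegrable _ _)
      _ = g t + ∫ s in u..v, |g' s| := by
        rw [abs_of_nonneg (intervalIntegral.integral_nonneg (hux.trans hxv)
          fun s _ => abs_nonneg _)]
  have := intervalIntegral.integral_mono_on (μ := volume) (hux.trans hxv)
    intervalIntegrable_const ((hgc.intervalIntegrable _ _).add intervalIntegrable_const) hvar
  rwa [intervalIntegral.integral_const, intervalIntegral.integral_add (hgc.intervalIntegrable _ _)
    intervalIntegrable_const, intervalIntegral.integral_const, smul_eq_mul, smul_eq_mul] at this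

theorem sum_integral_le_integral_of_pairwiseDisjoint {ι : Type*} {g : ℝ → ℝ} {a b : ℝ}
    (hab : a ≤ b) (hg : IntegrableOn g (Ioc a b)) (hg0 : ∀ t, 0 ≤ g t) (P : Finset ι)
    {u v : ι → ℝ} (huv : ∀ i ∈ P, u i ≤ v i)
    (hdisj : (P : Set ι).PairwiseDisjoint fun i => Ioc (u i) (v i))
    (hsub : ∀ i ∈ P, Ioc (u i) (v i) ⊆ Ioc a b) :
    ∑ i ∈ P, ∫ t in u i..v i, g t ≤ ∫ t in a..b, g t := by
  rw [sum_congr rfl fun i hi => intervalIntegral.integral_of_le (huv i hi),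
    ← integral_biUnion_finset P (fun _ _ => measurableSet_Ioc) hdisj
      (fun i hi => hg.mono_set (hsub i hi)), intervalIntegral.integral_of_le hab]
  exact setIntegral_mono_set hg (Filter.Eventually.of_forall hg0)
    (iUnion₂_subset hsub).eventuallyLE

theorem sum_le_of_separated {ι : Type*} {g g' : ℝ → ℝ} (hg : ∀ y, HasDerivAt g (g' y) y)
    (hg' : Continuous g') (hg0 : ∀ y, 0 ≤ g y) {a b δ : ℝ} (hab : a ≤ b) (hδ : 0 < δ)
    (P : Finset ι) (x : ι → ℝ) (hx : ∀ i ∈ P, x i ∈ Icc (a + δ / 2) (b - δ / 2))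
    (hsep : (P : Set ι).Pairwise fun i j => δ ≤ |x i - x j|) :
    ∑ i ∈ P, g (x i) ≤ δ⁻¹ * (∫ t in a..b, g t) + ∫ t in a..b, |g' t| := by
  have hgc : Continuous g := continuous_iff_continuousAt.2 fun y => (hg y).continuousAt
  have hdisj : (P : Set ι).PairwiseDisjoint fun i => Ioc (x i - δ / 2) (x i + δ / 2) := by
    intro i hi j hj hij
    rw [Function.onFun, Set.Ioc_disjoint_Ioc]
    rcases le_abs'.1 (hsep hi hj hij) with h | h
    · exact (min_le_left _ _).trans (le_max_of_le_right (by linarith))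
    · exact (min_le_right _ _).trans (le_max_of_le_left (by linarith))
  have hsub : ∀ i ∈ P, Ioc (x i - δ / 2) (x i + δ / 2) ⊆ Ioc a b := fun i hi =>
    Ioc_subset_Ioc (by linarith [(hx i hi).1]) (by linarith [(hx i hi).2])
  have hle : ∀ i ∈ P, x i - δ / 2 ≤ x i + δ / 2 := fun i _ => by linarith
  have hpoint : ∀ i ∈ P, g (x i) ≤ δ⁻¹ * (∫ t in x i - δ / 2..x i + δ / 2, g t) +
      ∫ t in x i - δ / 2..x i + δ / 2, |g' t| := by
    intro i _
    have := mul_le_integral_add_mul_integral_abs_deriv hg hg'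
      (show x i - δ / 2 ≤ x i by linarith) (show x i ≤ x i + δ / 2 by linarith)
    rw [show x i + δ / 2 - (x i - δ / 2) = δ by ring] at this
    rwa [← mul_le_mul_iff_of_pos_left hδ, mul_add, ← mul_assoc, mul_inv_cancel₀ hδ.ne', one_mul]
  refine (sum_le_sum hpoint).trans ?_
  rw [sum_add_distrib, ← mul_sum]
  gcongr
  · exact sum_integral_le_integral_of_pairwiseDisjoint hab hgc.integrableOn_Ioc hg0 P hle
      hdisj hsub
  · exact sum_integral_le_integral_of_pairwiseDisjoint hab hg'.abs.integrableOn_Ioc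
      (fun _ => abs_nonneg _) P hle hdisj hsub

end Gallagher

theorem integral_norm_sq_expSum_deriv_le {N : ℝ} (hS : ∀ n ∈ S, |(n : ℝ)| ≤ N) (a : ℝ) (m : ℕ) :
    ∫ x in a..a + m, ‖expSum S (fun n => 2 * π * I * n * w n) x‖ ^ 2 ≤
      m * ((2 * π * N) ^ 2 * ∑ n ∈ S, ‖w n‖ ^ 2) := by
  rw [integral_norm_sq_expSum]
  gcongr ?_ * ?_
  rw [mul_sum]
  gcongr with n hn
  simp only [norm_mul, mul_pow, norm_ofNat, norm_real, norm_I, norm_intCast, Real.norm_eq_abs,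
    abs_of_pos Real.pi_pos, mul_one]
  gcongr
  exact hS n hn

theorem integral_abs_deriv_norm_sq_expSum_le {N : ℝ} (hN : 0 < N) (hS : ∀ n ∈ S, |(n : ℝ)| ≤ N)
    (a : ℝ) (m : ℕ) :
    ∫ x in a..a + m, |2 * inner ℝ (expSum S w x) (expSum S (fun n => 2 * π * I * n * w n) x)| ≤
      4 * π * N * m * ∑ n ∈ S, ‖w n‖ ^ 2 := by
  set T := expSum S w
  set T' := expSum S fun n => 2 * π * I * n * w n
  set L := 2 * π * N
  have hL : 0 < L := by positivity
  -- AM-GM with the weight `L` that balances `∫ |T'|² ≤ L² ∫ |T|²`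
  have hamgm (x : ℝ) : |2 * inner ℝ (T x) (T' x)| ≤ L * ‖T x‖ ^ 2 + L⁻¹ * ‖T' x‖ ^ 2 := by
    have hsq : L * ‖T x‖ ^ 2 + L⁻¹ * ‖T' x‖ ^ 2 - 2 * ‖T x‖ * ‖T' x‖ =
        L⁻¹ * (L * ‖T x‖ - ‖T' x‖) ^ 2 := by field_simp; ring
    rw [abs_mul, abs_two]
    nlinarith [abs_real_inner_le_norm (T x) (T' x),
      show 0 ≤ L⁻¹ * (L * ‖T x‖ - ‖T' x‖) ^ 2 by positivity]
  have hc1 : Continuous fun x => L * ‖T x‖ ^ 2 := by fun_prop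
  have hc2 : Continuous fun x => L⁻¹ * ‖T' x‖ ^ 2 := by fun_prop
  calc _ ≤ ∫ x in a..a + m, (L * ‖T x‖ ^ 2 + L⁻¹ * ‖T' x‖ ^ 2) :=
        intervalIntegral.integral_mono_on (by simp)
          (Continuous.intervalIntegrable (by fun_prop) _ _) ((hc1.add hc2).intervalIntegrable _ _)
          fun x _ => hamgm x
    _ = L * (m * ∑ n ∈ S, ‖w n‖ ^ 2) + L⁻¹ * ∫ x in a..a + m, ‖T' x‖ ^ 2 := by
        rw [intervalIntegral.integral_add (hc1.intervalIntegrable _ _) (hc2.intervalIntegrable _ _),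
          intervalIntegral.integral_const_mul, intervalIntegral.integral_const_mul,
          integral_norm_sq_expSum]
    _ ≤ L * (m * ∑ n ∈ S, ‖w n‖ ^ 2) + L⁻¹ * (m * (L ^ 2 * ∑ n ∈ S, ‖w n‖ ^ 2)) := by
        gcongr; exact integral_norm_sq_expSum_deriv_le S w hS a m
    _ = 4 * π * N * m * ∑ n ∈ S, ‖w n‖ ^ 2 := by field_simp; ring

theorem sum_norm_sq_expSum_le_of_separated {ι : Type*} {N : ℝ} (hN : 0 < N)
    (hS : ∀ n ∈ S, |(n : ℝ)| ≤ N) {δ : ℝ} (hδ : 0 < δ) (hδ1 : δ ≤ 1) (P : Finset ι)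
    (x : ι → ℝ) (hx : ∀ i ∈ P, x i ∈ Set.Icc 0 1)
    (hsep : (P : Set ι).Pairwise fun i j => δ ≤ |x i - x j|) :
    ∑ i ∈ P, ‖expSum S w (x i)‖ ^ 2 ≤ 2 * (δ⁻¹ + 4 * π * N) * ∑ n ∈ S, ‖w n‖ ^ 2 := by
  set T := expSum S w
  set T' := expSum S fun n => 2 * π * I * n * w n
  -- two periods, with room for intervals of length `δ ≤ 1` around the points of `[0, 1]`
  have hT : ∫ t in (-1 / 2 : ℝ)..3 / 2, ‖T t‖ ^ 2 = 2 * ∑ n ∈ S, ‖w n‖ ^ 2 := by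
    convert integral_norm_sq_expSum S w (-1 / 2) 2 using 2 <;> norm_num
  have hT' : ∫ t in (-1 / 2 : ℝ)..3 / 2, |2 * inner ℝ (T t) (T' t)| ≤
      4 * π * N * 2 * ∑ n ∈ S, ‖w n‖ ^ 2 := by
    convert integral_abs_deriv_norm_sq_expSum_le S w hN hS (-1 / 2) 2 using 2 <;> norm_num
  calc ∑ i ∈ P, ‖T (x i)‖ ^ 2
      ≤ δ⁻¹ * (∫ t in (-1 / 2 : ℝ)..3 / 2, ‖T t‖ ^ 2) +
          ∫ t in (-1 / 2 : ℝ)..3 / 2, |2 * inner ℝ (T t) (T' t)| :=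
        sum_le_of_separated (fun t => (hasDerivAt_expSum S w t).norm_sq) (by fun_prop)
          (fun t => by positivity) (by norm_num) hδ P x
          (fun i hi => ⟨by linarith [(hx i hi).1], by linarith [(hx i hi).2]⟩) hsep
    _ ≤ 2 * (δ⁻¹ + 4 * π * N) * ∑ n ∈ S, ‖w n‖ ^ 2 := by rw [hT]; linarith

-- For `q = 1` this is `{0}`: the Farey point of denominator `1` is `0/1`.
def coprimeResidues (q : ℕ) : Finset ℕ := {a ∈ range q | a.Coprime q}

theorem eq_of_div_eq_div_of_coprime {a a' q q' : ℕ} (ha : a.Coprime q) (ha' : a'.Coprime q')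
    (hq : 0 < q) (hq' : 0 < q') (h : (a : ℝ) / q = a' / q') : q = q' ∧ a = a' := by
  rw [div_eq_div_iff (by positivity) (by positivity)] at h
  have h : a * q' = a' * q := by exact_mod_cast h
  have hqq : q = q' := Nat.dvd_antisymm
    (ha.symm.dvd_of_dvd_mul_left ⟨a', by rw [h, mul_comm]⟩)
    (ha'.symm.dvd_of_dvd_mul_left ⟨a, by rw [← h, mul_comm]⟩)
  subst hqq
  exact ⟨rfl, Nat.eq_of_mul_eq_mul_right hq h⟩

theorem inv_mul_le_abs_div_sub_div {a a' q q' : ℕ} (hq : 0 < q) (hq' : 0 < q')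
    (hne : (a : ℝ) / q ≠ a' / q') : ((q : ℝ) * q')⁻¹ ≤ |(a : ℝ) / q - a' / q'| := by
  have hqq' : (0 : ℝ) < q * q' := by positivity
  rw [div_sub_div _ _ (by positivity) (by positivity), abs_div, abs_of_pos hqq', inv_eq_one_div,
    div_le_div_iff_of_pos_right hqq']
  have hnum : (a : ℤ) * q' - q * a' ≠ 0 := by
    intro h0
    apply hne
    rw [div_eq_div_iff (by positivity) (by positivity)]
    have : (a : ℤ) * q' = a' * q := by linarith
    exact_mod_cast this
  exact_mod_cast Int.one_le_abs hnum

theorem sum_sum_coprimeResidues_norm_sq_expSum_le {N : ℝ} (hN : 0 < N)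
    (hS : ∀ n ∈ S, |(n : ℝ)| ≤ N) {Q : ℕ} (hQ : 1 ≤ Q) :
    ∑ q ∈ Icc 1 Q, ∑ a ∈ coprimeResidues q, ‖expSum S w (a / q)‖ ^ 2 ≤
      2 * (Q ^ 2 + 4 * π * N) * ∑ n ∈ S, ‖w n‖ ^ 2 := by
  have hQ' : (1 : ℝ) ≤ Q := by exact_mod_cast hQ
  have hmem : ∀ i ∈ (Icc 1 Q).sigma coprimeResidues,
      0 < i.1 ∧ i.1 ≤ Q ∧ i.2 < i.1 ∧ i.2.Coprime i.1 := by
    rintro ⟨q, a⟩ hi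
    simp only [mem_sigma, mem_Icc, coprimeResidues, mem_filter, mem_range] at hi
    exact ⟨hi.1.1, hi.1.2, hi.2⟩
  rw [sum_sigma']
  have := sum_norm_sq_expSum_le_of_separated S w hN hS (δ := ((Q : ℝ) ^ 2)⁻¹) (by positivity)
    (inv_le_one_of_one_le₀ (one_le_pow₀ hQ')) ((Icc 1 Q).sigma coprimeResidues)
    (fun i => (i.2 : ℝ) / i.1) ?_ ?_
  · rwa [inv_inv] at this
  · intro i hi
    obtain ⟨h0, -, hlt, -⟩ := hmem i hi
    exact ⟨by positivity, div_le_one_of_le₀ (by exact_mod_cast hlt.le) (by positivity)⟩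
  · rintro ⟨q, a⟩ hi ⟨q', a'⟩ hj hij
    obtain ⟨hq, hqQ, -, ha⟩ := hmem _ hi
    obtain ⟨hq', hqQ', -, ha'⟩ := hmem _ hj
    have hne : (a : ℝ) / q ≠ a' / q' := fun h => by
      obtain ⟨rfl, rfl⟩ := eq_of_div_eq_div_of_coprime ha ha' hq hq' h
      exact hij rfl
    refine le_trans ?_ (inv_mul_le_abs_div_sub_div hq hq' hne)
    rw [sq]
    gcongr

theorem sum_range_norm_sq_expSum_add_div (p : ℕ) [NeZero p] (x : ℝ) :
    ∑ b ∈ range p, ‖expSum S w (x + b / p)‖ ^ 2 =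
      p * ∑ h : ZMod p, ‖expSum {n ∈ S | (n : ZMod p) = h} w x‖ ^ 2 := by
  apply ofReal_injective
  set D : ℤ → ℤ → ℂ := fun m n => w m * conj (w n) * e ((m - n : ℤ) * x)
  have hL : ∑ b ∈ range p, ((‖expSum S w (x + b / p)‖ ^ 2 : ℝ) : ℂ) =
      ∑ m ∈ S, ∑ n ∈ S, if (n : ZMod p) = m then p * D m n else 0 := by
    simp_rw [ofReal_norm_sq_expSum, mul_add, e_add, ← mul_assoc, ← mul_div_assoc]
    rw [sum_comm]
    refine sum_congr rfl fun m _ => ?_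
    rw [sum_comm]
    refine sum_congr rfl fun n _ => ?_
    rw [← mul_sum, sum_range_e_mul_div _ (NeZero.pos p)]
    simp only [Int.cast_sub, sub_eq_zero, eq_comm (a := (m : ZMod p)), D]
    split_ifs <;> ring
  have hR : ∑ h : ZMod p, ((‖expSum {n ∈ S | (n : ZMod p) = h} w x‖ ^ 2 : ℝ) : ℂ) =
      ∑ m ∈ S, ∑ n ∈ S, if (n : ZMod p) = m then D m n else 0 := by
    simp_rw [ofReal_norm_sq_expSum, sum_filter]
    rw [sum_comm]
    refine sum_congr rfl fun m _ => ?_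
    rw [sum_ite_eq, if_pos (mem_univ _)]
  rw [ofReal_mul, ofReal_sum, ofReal_sum, hL, hR, ofReal_natCast]
  simp_rw [mul_sum, mul_ite, mul_zero]

theorem norm_sq_expSum_le_card_image_mul (p : ℕ) [NeZero p] (x : ℝ) :
    ‖expSum S w x‖ ^ 2 ≤ #(S.image ((↑) : ℤ → ZMod p)) *
      ∑ h : ZMod p, ‖expSum {n ∈ S | (n : ZMod p) = h} w x‖ ^ 2 := by
  set R := S.image ((↑) : ℤ → ZMod p)
  set T := fun h : ZMod p => expSum {n ∈ S | (n : ZMod p) = h} w x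
  have hsplit : expSum S w x = ∑ h ∈ R, T h :=
    (sum_fiberwise_of_maps_to (fun n hn => mem_image_of_mem _ hn) _).symm
  calc ‖expSum S w x‖ ^ 2 ≤ (∑ h ∈ R, ‖T h‖) ^ 2 := by
        rw [hsplit]; gcongr; exact norm_sum_le _ _
    _ ≤ #R * ∑ h ∈ R, ‖T h‖ ^ 2 := sq_sum_le_card_mul_sum_sq
    _ ≤ #R * ∑ h, ‖T h‖ ^ 2 := by gcongr; exact subset_univ _

theorem div_mul_norm_sq_expSum_le_sum_erase_zero {p σ : ℕ} (hσ : σ < p)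
    (hcard : #(S.image ((↑) : ℤ → ZMod p)) = p - σ) (x : ℝ) :
    σ / (p - σ : ℝ) * ‖expSum S w x‖ ^ 2 ≤
      ∑ b ∈ (range p).erase 0, ‖expSum S w (x + b / p)‖ ^ 2 := by
  have : NeZero p := ⟨by omega⟩
  set A := ‖expSum S w x‖ ^ 2
  set E := ∑ h : ZMod p, ‖expSum {n ∈ S | (n : ZMod p) = h} w x‖ ^ 2
  have hω : (0 : ℝ) < p - σ := by rw [sub_pos]; exact_mod_cast hσ
  have hCS : A ≤ (p - σ) * E := by
    have := norm_sq_expSum_le_card_image_mul S w p x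
    rwa [hcard, Nat.cast_sub hσ.le] at this
  have hsum : A + ∑ b ∈ (range p).erase 0, ‖expSum S w (x + b / p)‖ ^ 2 = p * E := by
    rw [← sum_range_norm_sq_expSum_add_div, ← add_sum_erase _ _ (mem_range.2 (NeZero.pos p))]
    simp [A]
  have hA : A / (p - σ) ≤ E := by rwa [div_le_iff₀' hω]
  calc σ / (p - σ : ℝ) * A = p * (A / (p - σ)) - A := by field_simp; ring
    _ ≤ p * E - A := by gcongr
    _ = _ := by linarith

theorem coprimeResidues_of_prime {p : ℕ} (hp : p.Prime) :
    coprimeResidues p = (range p).erase 0 := by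
  ext b
  simp only [coprimeResidues, mem_filter, mem_range, mem_erase]
  constructor
  · rintro ⟨hb, hcop⟩
    refine ⟨fun h0 => ?_, hb⟩
    subst h0
    exact hp.one_lt.ne' (Nat.coprime_zero_left _ |>.1 hcop)
  · rintro ⟨h0, hb⟩
    exact ⟨hb, Nat.coprime_comm.1 <|
      hp.coprime_iff_not_dvd.2 fun h => h0 (Nat.eq_zero_of_dvd_of_lt h hb)⟩

theorem coprime_mul_add_mul {a b p r : ℕ} (ha : a.Coprime r) (hb : b.Coprime p)
    (hpr : p.Coprime r) : (a * p + b * r).Coprime (p * r) := by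
  refine Nat.Coprime.symm (Nat.Coprime.mul_left ?_ ?_)
  · rw [Nat.coprime_mul_right_add_right]
    exact Nat.Coprime.mul_right hb.symm hpr
  · rw [Nat.coprime_add_mul_right_right]
    exact Nat.Coprime.mul_right ha.symm hpr.symm

theorem eq_of_mul_add_mul_modEq {a a' b b' p r : ℕ} (hpr : p.Coprime r) (ha : a < r)
    (ha' : a' < r) (hb : b < p) (hb' : b' < p)
    (h : a * p + b * r ≡ a' * p + b' * r [MOD p * r]) : a = a' ∧ b = b' := by
  have hr : a * p ≡ a' * p [MOD r] := by
    have := h.of_mul_left p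
    rwa [Nat.ModEq, Nat.add_mul_mod_self_right, Nat.add_mul_mod_self_right] at this
  have hp : b * r ≡ b' * r [MOD p] := by
    have := h.of_mul_right r
    rwa [Nat.ModEq, Nat.mul_add_mod_self_right, Nat.mul_add_mod_self_right] at this
  exact ⟨(hr.cancel_right_of_coprime hpr.symm).eq_of_lt_of_lt ha ha',
    (hp.cancel_right_of_coprime hpr).eq_of_lt_of_lt hb hb'⟩

theorem sum_sum_coprimeResidues_le_sum_coprimeResidues_mul {F : ℝ → ℝ}
    (hF : Function.Periodic F 1) (hF0 : ∀ x, 0 ≤ F x) {p r : ℕ} (hpr : p.Coprime r) :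
    ∑ a ∈ coprimeResidues r, ∑ b ∈ coprimeResidues p, F (a / r + b / p) ≤
      ∑ c ∈ coprimeResidues (p * r), F (c / (p * r : ℕ)) := by
  set φ : ℕ × ℕ → ℕ := fun ab => (ab.1 * p + ab.2 * r) % (p * r)
  set D := coprimeResidues r ×ˢ coprimeResidues p
  have hmem {a b : ℕ} (h : (a, b) ∈ D) : a < r ∧ a.Coprime r ∧ b < p ∧ b.Coprime p := by
    simp only [D, mem_product, coprimeResidues, mem_filter, mem_range] at h
    exact ⟨h.1.1, h.1.2, h.2.1, h.2.2⟩
  have hmaps : ∀ ab ∈ D, φ ab ∈ coprimeResidues (p * r) := by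
    rintro ⟨a, b⟩ h
    obtain ⟨ha, har, hb, hbp⟩ := hmem h
    simp only [coprimeResidues, mem_filter, mem_range, φ, ZMod.coprime_mod_iff_coprime]
    exact ⟨Nat.mod_lt _ (Nat.mul_pos (by omega) (by omega)), coprime_mul_add_mul har hbp hpr⟩
  have hinj : Set.InjOn φ D := by
    rintro ⟨a, b⟩ h ⟨a', b'⟩ h' heq
    obtain ⟨ha, -, hb, -⟩ := hmem h
    obtain ⟨ha', -, hb', -⟩ := hmem h'
    obtain ⟨rfl, rfl⟩ := eq_of_mul_add_mul_modEq hpr ha ha' hb hb' heq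
    rfl
  have hval : ∀ ab ∈ D, F (ab.1 / r + ab.2 / p) = F (φ ab / (p * r : ℕ)) := by
    rintro ⟨a, b⟩ h
    obtain ⟨ha, -, hb, -⟩ := hmem h
    have hp : (0 : ℝ) < p := by exact_mod_cast (show 0 < p by omega)
    have hr : (0 : ℝ) < r := by exact_mod_cast (show 0 < r by omega)
    set k := (a * p + b * r) / (p * r)
    have hdiv : ((a * p + b * r : ℕ) : ℝ) = (p * r : ℕ) * k + φ (a, b) := by
      exact_mod_cast (Nat.div_add_mod _ _).symm
    rw [show (a : ℝ) / r + b / p = φ (a, b) / (p * r : ℕ) + k * 1 by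
      push_cast at hdiv ⊢
      field_simp
      linear_combination hdiv]
    exact hF.nat_mul _ _
  calc ∑ a ∈ coprimeResidues r, ∑ b ∈ coprimeResidues p, F (a / r + b / p)
      = ∑ c ∈ D.image φ, F (c / (p * r : ℕ)) := by
        rw [sum_image hinj, sum_product]
        exact sum_congr rfl fun a ha => sum_congr rfl fun b hb =>
          hval (a, b) (mem_product.2 ⟨ha, hb⟩)
    _ ≤ ∑ c ∈ coprimeResidues (p * r), F (c / (p * r : ℕ)) :=
        sum_le_sum_of_subset_of_nonneg (image_subset_iff.2 hmaps) fun _ _ _ => hF0 _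

theorem norm_sq_sum_mul_prod_le_sum_coprimeResidues (σ : ℕ → ℕ) (P : Finset ℕ)
    (hP : ∀ p ∈ P, p.Prime ∧ σ p < p ∧ #(S.image ((↑) : ℤ → ZMod p)) = p - σ p) :
    ‖∑ n ∈ S, w n‖ ^ 2 * ∏ p ∈ P, (σ p : ℝ) / (p - σ p) ≤
      ∑ a ∈ coprimeResidues (∏ p ∈ P, p), ‖expSum S w (a / (∏ p ∈ P, p : ℕ))‖ ^ 2 := by
  induction P using Finset.induction_on with
  | empty =>
    rw [prod_empty, prod_empty, mul_one, show coprimeResidues 1 = {0} by decide, sum_singleton]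
    simp [expSum, e_zero]
  | insert p P hpP ih =>
    obtain ⟨hp, hσ, hcard⟩ := hP p (mem_insert_self p P)
    have hcop : p.Coprime (∏ q ∈ P, q) := Nat.Coprime.prod_right fun q hq =>
      (Nat.coprime_primes hp (hP q (mem_insert_of_mem hq)).1).2 fun h => hpP (h ▸ hq)
    have hc : (0 : ℝ) ≤ σ p / (p - σ p) :=
      div_nonneg (by positivity) (by rw [sub_nonneg]; exact_mod_cast hσ.le)
    rw [prod_insert hpP, prod_insert hpP, mul_left_comm]
    calc (σ p : ℝ) / (p - σ p) * (‖∑ n ∈ S, w n‖ ^ 2 * ∏ q ∈ P, (σ q : ℝ) / (q - σ q))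
        ≤ ∑ a ∈ coprimeResidues (∏ q ∈ P, q),
            (σ p : ℝ) / (p - σ p) * ‖expSum S w (a / (∏ q ∈ P, q : ℕ))‖ ^ 2 := by
          rw [← mul_sum]
          exact mul_le_mul_of_nonneg_left (ih fun q hq => hP q (mem_insert_of_mem hq)) hc
      _ ≤ ∑ a ∈ coprimeResidues (∏ q ∈ P, q), ∑ b ∈ coprimeResidues p,
            ‖expSum S w (a / (∏ q ∈ P, q : ℕ) + b / p)‖ ^ 2 := by
          gcongr with a
          rw [coprimeResidues_of_prime hp]
          exact div_mul_norm_sq_expSum_le_sum_erase_zero S w hσ hcard _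
      _ ≤ _ := sum_sum_coprimeResidues_le_sum_coprimeResidues_mul
          (F := fun x => ‖expSum S w x‖ ^ 2) ((periodic_expSum S w).comp (‖·‖ ^ 2))
          (fun _ => by positivity) hcop

/-- The `G(z)` of the statement, with `Q = ⌊z⌋`. -/
def sieveSum (σ : ℕ → ℕ) (Q : ℕ) : ℝ :=
  ∑ n ∈ Icc 1 Q, ((moebius n).natAbs : ℝ) * ∏ p ∈ n.primeFactors, (σ p : ℝ) / (p - σ p)

theorem norm_sq_sum_mul_sieveSum_le (σ : ℕ → ℕ) (Q : ℕ)
    (hσ : ∀ p : ℕ, p.Prime → p ≤ Q → σ p < p ∧ #(S.image ((↑) : ℤ → ZMod p)) = p - σ p) :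
    ‖∑ n ∈ S, w n‖ ^ 2 * sieveSum σ Q ≤
      ∑ q ∈ Icc 1 Q, ∑ a ∈ coprimeResidues q, ‖expSum S w (a / q)‖ ^ 2 := by
  rw [sieveSum, mul_sum]
  refine sum_le_sum fun n hn => ?_
  by_cases hsq : Squarefree n
  · have := norm_sq_sum_mul_prod_le_sum_coprimeResidues S w σ n.primeFactors fun p hp =>
      ⟨Nat.prime_of_mem_primeFactors hp, hσ p (Nat.prime_of_mem_primeFactors hp)
        ((Nat.le_of_mem_primeFactors hp).trans (mem_Icc.1 hn).2)⟩
    rw [Nat.prod_primeFactors_of_squarefree hsq] at this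
    simpa [moebius_apply_of_squarefree hsq, Int.natAbs_pow] using this
  · rw [moebius_eq_zero_of_not_squarefree hsq]
    simpa using sum_nonneg fun _ _ => by positivity

theorem one_le_sieveSum {σ : ℕ → ℕ} {Q : ℕ} (hQ : 1 ≤ Q)
    (hσ : ∀ p : ℕ, p.Prime → p ≤ Q → σ p < p) : 1 ≤ sieveSum σ Q := by
  rw [sieveSum]
  refine le_of_eq_of_le (by simp) (single_le_sum (f := fun n => ((moebius n).natAbs : ℝ) *
    ∏ p ∈ n.primeFactors, (σ p : ℝ) / (p - σ p)) (fun n hn => ?_) (mem_Icc.2 ⟨le_rfl, hQ⟩))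
  refine mul_nonneg (by positivity) (prod_nonneg fun p hp => div_nonneg (by positivity) ?_)
  have hpQ : p ≤ Q := (Nat.le_of_mem_primeFactors hp).trans (mem_Icc.1 hn).2
  rw [sub_nonneg]
  exact_mod_cast (hσ p (Nat.prime_of_mem_primeFactors hp) hpQ).le

theorem card_mul_sieveSum_le {σ : ℕ → ℕ} {N : ℝ} (hN : 0 < N)
    (hS : ∀ n ∈ S, |(n : ℝ)| ≤ N) {Q : ℕ} (hQ : 1 ≤ Q)
    (hσ : ∀ p : ℕ, p.Prime → p ≤ Q → σ p < p ∧ #(S.image ((↑) : ℤ → ZMod p)) = p - σ p) :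
    #S * sieveSum σ Q ≤ 2 * (Q ^ 2 + 4 * π * N) := by
  have key := (norm_sq_sum_mul_sieveSum_le S (fun _ => 1) σ Q hσ).trans
    (sum_sum_coprimeResidues_norm_sq_expSum_le S (fun _ => 1) hN hS hQ)
  simp only [sum_const, nsmul_eq_mul, mul_one, norm_one, one_pow, norm_natCast] at key
  rcases (#S).eq_zero_or_pos with h | h
  · rw [h, Nat.cast_zero, zero_mul]; positivity
  · exact le_of_mul_le_mul_right (by linarith) (show (0 : ℝ) < #S by exact_mod_cast h)

end

end LargeSieve

open LargeSieve

theorem montgomery_large_sieve :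
    ∃ C : ℝ, 0 < C ∧
      ∀ (z N : ℝ), 1 ≤ z → 1 ≤ N →
      ∀ (S : Finset ℤ) (sig : ℕ → ℕ),
        (∀ n ∈ S, 1 ≤ n ∧ (n : ℝ) ≤ N) →
        (∀ p : ℕ, p.Prime → (p : ℝ) ≤ z →
          sig p < p ∧ (S.image (fun n : ℤ => (n : ZMod p))).card = p - sig p) →
        (S.card : ℝ) ≤ C * (N + z ^ 2) /
          (∑ n ∈ Finset.Icc 1 ⌊z⌋₊,
            ((moebius n).natAbs : ℝ) *
              ∏ p ∈ n.primeFactors, (sig p : ℝ) / ((p : ℝ) - sig p)) := by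
  refine ⟨26, by norm_num, fun z N hz hN S sig hS hsig => ?_⟩
  have hQ : 1 ≤ ⌊z⌋₊ := Nat.le_floor (by exact_mod_cast hz)
  have hQz : (⌊z⌋₊ : ℝ) ≤ z := Nat.floor_le (by linarith)
  have hsigQ : ∀ p : ℕ, p.Prime → p ≤ ⌊z⌋₊ → sig p < p ∧
      (S.image (fun n : ℤ => (n : ZMod p))).card = p - sig p :=
    fun p hp hpQ => hsig p hp ((Nat.cast_le.2 hpQ).trans hQz)
  have hSN : ∀ n ∈ S, |(n : ℝ)| ≤ N := fun n hn => by
    rw [abs_of_nonneg (by exact_mod_cast (zero_lt_one.trans_le (hS n hn).1).le)]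
    exact (hS n hn).2
  have hG := one_le_sieveSum hQ fun p hp hpQ => (hsigQ p hp hpQ).1
  have hbound := card_mul_sieveSum_le S (by linarith) hSN hQ hsigQ
  change (S.card : ℝ) ≤ 26 * (N + z ^ 2) / sieveSum sig ⌊z⌋₊
  rw [le_div_iff₀ (by linarith)]
  nlinarith [Real.pi_lt_d2, pow_le_pow_left₀ (by positivity) hQz 2]
end
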